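/- arXiv:math/9712208 — 8 statements merged into one kernel-verified Lean document; each statement's English description precedes it below -/
import Mathlib

section
/- For n variables x_1,...,x_n, one has x_1⋯x_n · Σ_{k=1}^n (-1)^{k-1} (1-x_k) x_k^{-1} ∏_{i≠k} (1 - x_i x_k) ∏_{1≤i<j≤n, i,j≠k} (x_j - x_i) = (1 - x_1⋯x_n) ∏_{1≤i<j≤n} (x_j - x_i). -/
open Finset Polynomial

lemma frac_split {K : Type*} [Field K] {a c d : K} (h1 : c ≠ d) (h2 : a ≠ c) (h3 : a ≠ d) :
    (c - a)⁻¹ * (a - d)⁻¹ = (c - d)⁻¹ * ((a - d)⁻¹ + (c - a)⁻¹) := by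
  have h1' : c - d ≠ 0 := sub_ne_zero.mpr h1
  have h2' : c - a ≠ 0 := sub_ne_zero.mpr (Ne.symm h2)
  have h3' : a - d ≠ 0 := sub_ne_zero.mpr h3
  field_simp
  ring

lemma pf_aux {K : Type*} [Field K] [DecidableEq K] (t : Finset K) (ht : t.Nonempty) :
    ∀ c ∉ t, (∏ a ∈ t, (c - a))⁻¹ =
      ∑ a ∈ t, (c - a)⁻¹ * (∏ b ∈ t.erase a, (a - b))⁻¹ := by
  induction ht using Finset.Nonempty.cons_induction with
  | singleton a => intro c _; simp
  | cons d u hd hu ih =>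
    intro c hc
    rw [Finset.mem_cons, not_or] at hc
    obtain ⟨hcd, hcu⟩ := hc
    rw [Finset.prod_cons, Finset.sum_cons, mul_inv, Finset.erase_cons]
    have h1 : ∑ a ∈ u, (c - a)⁻¹ * (∏ b ∈ (Finset.cons d u hd).erase a, (a - b))⁻¹
        = ∑ a ∈ u, (c - a)⁻¹ * ((a-d)⁻¹ * (∏ b ∈ u.erase a, (a - b))⁻¹) := by
      refine Finset.sum_congr rfl fun a ha => ?_
      have had : a ≠ d := fun h => hd (h ▸ ha)
      rw [Finset.erase_cons_of_ne hd had.symm, Finset.prod_cons, mul_inv]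
    rw [h1]
    have h2 : ∀ a ∈ u, (c - a)⁻¹ * ((a-d)⁻¹ * (∏ b ∈ u.erase a, (a - b))⁻¹)
        = (c - d)⁻¹ * (((a - d)⁻¹ + (c - a)⁻¹) * (∏ b ∈ u.erase a, (a - b))⁻¹) := by
      intro a ha
      have hac : a ≠ c := fun h => hcu (h ▸ ha)
      have had : a ≠ d := fun h => hd (h ▸ ha)
      rw [← mul_assoc, ← mul_assoc, frac_split hcd hac had]
    rw [Finset.sum_congr rfl h2, ← Finset.mul_sum]
    have h3 : ∑ a ∈ u, ((a - d)⁻¹ + (c - a)⁻¹) * (∏ b ∈ u.erase a, (a - b))⁻¹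
        = (∑ a ∈ u, (a - d)⁻¹ * (∏ b ∈ u.erase a, (a - b))⁻¹)
          + ∑ a ∈ u, (c - a)⁻¹ * (∏ b ∈ u.erase a, (a - b))⁻¹ := by
      rw [← Finset.sum_add_distrib]; exact Finset.sum_congr rfl fun a _ => by ring
    have h4 : ∑ a ∈ u, (a - d)⁻¹ * (∏ b ∈ u.erase a, (a - b))⁻¹
        = -(∏ a ∈ u, (d - a))⁻¹ := by
      rw [ih d hd, ← Finset.sum_neg_distrib]
      refine Finset.sum_congr rfl fun a _ => ?_
      rw [← neg_mul, ← inv_neg, neg_sub]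
    rw [h3, h4, ← ih c hcu]
    ring

lemma S1 {K : Type*} [Field K] [DecidableEq K] (s : Finset K) (h : 2 ≤ s.card) :
    ∑ a ∈ s, (∏ b ∈ s.erase a, (a - b))⁻¹ = 0 := by
  obtain ⟨c, hc⟩ : s.Nonempty := Finset.card_pos.mp (by omega)
  set t := s.erase c with htdef
  have htne : t.Nonempty := by
    rw [← Finset.card_pos, Finset.card_erase_of_mem hc]; omega
  have hct : c ∉ t := Finset.notMem_erase c s
  rw [← Finset.add_sum_erase s _ hc, ← htdef]
  have h2 : ∑ a ∈ t, (∏ b ∈ s.erase a, (a - b))⁻¹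
      = ∑ a ∈ t, (a - c)⁻¹ * (∏ b ∈ t.erase a, (a - b))⁻¹ := by
    refine Finset.sum_congr rfl fun a ha => ?_
    have hac : a ≠ c := Finset.ne_of_mem_erase ha
    have hcs : c ∈ s.erase a := Finset.mem_erase.mpr ⟨hac.symm, hc⟩
    rw [← Finset.mul_prod_erase _ _ hcs, Finset.erase_right_comm, mul_inv, ← htdef]
  have h3 : ∑ a ∈ t, (a - c)⁻¹ * (∏ b ∈ t.erase a, (a - b))⁻¹
      = -(∏ a ∈ t, (c - a))⁻¹ := by
    rw [pf_aux t htne c hct, ← Finset.sum_neg_distrib]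
    exact Finset.sum_congr rfl fun a _ => by rw [← neg_mul, ← inv_neg, neg_sub]
  rw [h2, h3]
  ring

lemma key {K : Type*} [Field K] [DecidableEq K] :
    ∀ (m : ℕ) (s : Finset K) (f : K[X]), s.card = m → f.natDegree + 1 ≤ m →
    ∑ a ∈ s, f.eval a * (∏ b ∈ s.erase a, (a - b))⁻¹ = f.coeff (m - 1) := by
  intro m
  induction m using Nat.strong_induction_on with
  | _ m ih =>
  intro s f hcard hdeg
  match m, hdeg with
  | 1, hdeg =>
    obtain ⟨c, rfl⟩ := Finset.card_eq_one.mp hcard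
    obtain ⟨r, rfl⟩ := Polynomial.natDegree_eq_zero.mp (by omega : f.natDegree = 0)
    simp
  | (k+2), hdeg =>
    obtain ⟨c, hc⟩ : s.Nonempty := Finset.card_pos.mp (by omega)
    set t := s.erase c with htdef
    have htc : t.card = k + 1 := by
      rw [htdef, Finset.card_erase_of_mem hc, hcard]
      omega
    have hct : c ∉ t := Finset.notMem_erase c s
    set g := f /ₘ (Polynomial.X - Polynomial.C c) with hgdef
    have hfg : (Polynomial.X - Polynomial.C c) * g + Polynomial.C (f.eval c) = f := by
      rw [hgdef, ← Polynomial.modByMonic_X_sub_C_eq_C_eval, add_comm]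
      exact Polynomial.modByMonic_add_div f (X - C c)
    have hgd : g.natDegree = f.natDegree - 1 := by
      rw [hgdef, Polynomial.natDegree_divByMonic f (Polynomial.monic_X_sub_C c),
        Polynomial.natDegree_X_sub_C]
    have heval : ∀ a : K, f.eval a = (a - c) * g.eval a + f.eval c := by
      intro a; conv_lhs => rw [← hfg]
      simp only [Polynomial.eval_add, Polynomial.eval_mul, Polynomial.eval_sub,
        Polynomial.eval_X, Polynomial.eval_C]
    have hsplit : ∑ a ∈ s, f.eval a * (∏ b ∈ s.erase a, (a - b))⁻¹
        = (∑ a ∈ s, (a - c) * g.eval a * (∏ b ∈ s.erase a, (a - b))⁻¹)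
          + f.eval c * ∑ a ∈ s, (∏ b ∈ s.erase a, (a - b))⁻¹ := by
      rw [Finset.mul_sum, ← Finset.sum_add_distrib]
      exact Finset.sum_congr rfl fun a _ => by rw [heval a]; ring
    rw [hsplit, S1 s (by omega), mul_zero, add_zero]
    rw [← Finset.add_sum_erase s _ hc, sub_self, zero_mul, zero_mul, zero_add, ← htdef]
    have hterm : ∑ a ∈ t, (a - c) * g.eval a * (∏ b ∈ s.erase a, (a - b))⁻¹
        = ∑ a ∈ t, g.eval a * (∏ b ∈ t.erase a, (a - b))⁻¹ := by
      refine Finset.sum_congr rfl fun a ha => ?_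
      have hac : a ≠ c := Finset.ne_of_mem_erase ha
      have hcs : c ∈ s.erase a := Finset.mem_erase.mpr ⟨hac.symm, hc⟩
      rw [← Finset.mul_prod_erase _ _ hcs, Finset.erase_right_comm, mul_inv, ← htdef]
      have hne : a - c ≠ 0 := sub_ne_zero.mpr hac
      have : (a - c) * Polynomial.eval a g * ((a-c)⁻¹ * (∏ b ∈ t.erase a, (a - b))⁻¹)
          = Polynomial.eval a g * (∏ b ∈ t.erase a, (a - b))⁻¹ * ((a - c) * (a-c)⁻¹) := by
        ring
      rw [this, mul_inv_cancel₀ hne, mul_one]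
    rw [hterm, ih (k+1) (by omega) t g htc (by omega)]
    -- now: g.coeff (k+1-1) = f.coeff (k+2-1)
    have hgk : g.coeff (k+1) = 0 :=
      Polynomial.coeff_eq_zero_of_natDegree_lt (by omega)
    have : f.coeff (k+1) = g.coeff k := by
      conv_lhs => rw [← hfg]
      rw [Polynomial.coeff_add, Polynomial.coeff_C, if_neg (by omega), add_zero,
        sub_mul, Polynomial.coeff_sub, Polynomial.coeff_X_mul,
        Polynomial.coeff_C_mul, hgk, mul_zero, sub_zero]
    simpa using this.symm

lemma residue {K : Type*} [Field K] [DecidableEq K] {n : ℕ} (x : Fin n → K)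
    (hinj : Function.Injective x) (hx0 : ∀ k, x k ≠ 0) (hx1 : ∀ k, x k ≠ -1) :
    ∑ k : Fin n, (1 - x k) * (x k)⁻¹ * (∏ i ∈ Finset.univ.erase k, (1 - x i * x k)) *
      (∏ i ∈ Finset.univ.erase k, (x k - x i))⁻¹
    = (-1:K)^(n+1) * (1 - ∏ i, x i) * (∏ i, x i)⁻¹ := by
  have h1x : ∀ k, (1:K) + x k ≠ 0 := by
    intro k h; exact hx1 k (by linear_combination h)
  set B := Finset.image x Finset.univ with hBdef
  have hB0 : (0:K) ∉ B := by
    simp only [hBdef, Finset.mem_image]; rintro ⟨k, -, h⟩; exact hx0 k h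
  have hB1 : (-1:K) ∉ B := by
    simp only [hBdef, Finset.mem_image]; rintro ⟨k, -, h⟩; exact hx1 k h
  have h01 : (0:K) ≠ -1 := by
    intro h; exact one_ne_zero (α := K) (by linear_combination h)
  have h0 : (0:K) ∉ insert (-1:K) B := by
    simp only [Finset.mem_insert]; rintro (h | h); exact h01 h; exact hB0 h
  set s := insert (0:K) (insert (-1:K) B) with hsdef
  have hcard : s.card = n + 2 := by
    rw [hsdef, Finset.card_insert_of_notMem h0, Finset.card_insert_of_notMem hB1,
      Finset.card_image_of_injective _ hinj, Finset.card_univ, Fintype.card_fin]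
  set f : Polynomial K := ∏ i, (1 - Polynomial.C (x i) * Polynomial.X) with hfdef
  have hfd : f.natDegree ≤ n := by
    refine le_trans (Polynomial.natDegree_prod_le _ _) ?_
    calc ∑ i : Fin n, (1 - Polynomial.C (x i) * Polynomial.X).natDegree
        ≤ ∑ i : Fin n, 1 := by
          refine Finset.sum_le_sum fun i _ => ?_
          refine le_trans (Polynomial.natDegree_sub_le _ _) ?_
          simp only [Polynomial.natDegree_one, max_le_iff]
          exact ⟨by omega, le_trans (Polynomial.natDegree_C_mul_le _ _) Polynomial.natDegree_X.le⟩
      _ = n := by simp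
  have hev : ∀ a : K, f.eval a = ∏ i, (1 - x i * a) := by
    intro a; simp [hfdef, Polynomial.eval_prod]
  have hkey := key (n+2) s f hcard (by omega)
  rw [Polynomial.coeff_eq_zero_of_natDegree_lt (by omega : f.natDegree < n + 2 - 1)] at hkey
  rw [hsdef, Finset.sum_insert h0, Finset.sum_insert hB1,
    Finset.sum_image (fun a _ b _ h => hinj h)] at hkey
  -- term at 0
  have e0 : (insert (0:K) (insert (-1:K) B)).erase 0 = insert (-1:K) B :=
    Finset.erase_insert h0
  have t0 : f.eval 0 * (∏ b ∈ (insert (0:K) (insert (-1:K) B)).erase 0, ((0:K) - b))⁻¹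
      = (-1:K)^n * (∏ i, x i)⁻¹ := by
    rw [e0, Finset.prod_insert hB1, hBdef,
      Finset.prod_image (fun a _ b _ h => hinj h)]
    have : ∀ i : Fin n, (0:K) - x i = (-1) * x i := fun i => by ring
    rw [Finset.prod_congr rfl (fun i _ => this i), Finset.prod_mul_distrib,
      Finset.prod_const, Finset.card_univ, Fintype.card_fin]
    have : f.eval 0 = 1 := by simp [hev]
    rw [this, one_mul, show (0:K) - -1 = 1 by ring, one_mul]
    simp only [mul_inv, ← inv_pow, inv_neg_one]
  -- term at -1
  have e1 : (insert (0:K) (insert (-1:K) B)).erase (-1) = insert (0:K) B := by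
    rw [Finset.erase_insert_of_ne h01, Finset.erase_insert hB1]
  have t1 : f.eval (-1) * (∏ b ∈ (insert (0:K) (insert (-1:K) B)).erase (-1), ((-1:K) - b))⁻¹
      = (-1:K)^(n+1) := by
    rw [e1, Finset.prod_insert hB0, hBdef,
      Finset.prod_image (fun a _ b _ h => hinj h)]
    have h2 : ∀ i : Fin n, (-1:K) - x i = (-1) * (1 + x i) := fun i => by ring
    rw [Finset.prod_congr rfl (fun i _ => h2 i), Finset.prod_mul_distrib,
      Finset.prod_const, Finset.card_univ, Fintype.card_fin]
    have h3 : f.eval (-1) = ∏ i, (1 + x i) := by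
      rw [hev]; exact Finset.prod_congr rfl fun i _ => by ring
    have h4 : (∏ i, ((1:K) + x i)) ≠ 0 := Finset.prod_ne_zero_iff.mpr fun i _ => h1x i
    rw [h3, show (-1:K) - 0 = -1 by ring]
    simp only [mul_inv, ← inv_pow, inv_neg_one]
    linear_combination (-1:K)^(n+1) * mul_inv_cancel₀ h4
  rw [t0, t1] at hkey
  -- terms at x k
  have tk : ∀ k : Fin n,
      f.eval (x k) * (∏ b ∈ (insert (0:K) (insert (-1:K) B)).erase (x k), (x k - b))⁻¹
      = (1 - x k) * (x k)⁻¹ * (∏ i ∈ Finset.univ.erase k, (1 - x i * x k)) *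
        (∏ i ∈ Finset.univ.erase k, (x k - x i))⁻¹ := by
    intro k
    have ek : (insert (0:K) (insert (-1:K) B)).erase (x k)
        = insert (0:K) (insert (-1:K) (Finset.image x (Finset.univ.erase k))) := by
      rw [Finset.erase_insert_of_ne (fun h => hx0 k h.symm),
        Finset.erase_insert_of_ne (fun h => hx1 k h.symm), hBdef,
        Finset.image_erase hinj]
    have hC0 : (0:K) ∉ insert (-1:K) (Finset.image x (Finset.univ.erase k)) := by
      simp only [Finset.mem_insert, Finset.mem_image]
      rintro (h | ⟨i, -, h⟩); exact h01 h; exact hx0 i h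
    have hC1 : (-1:K) ∉ Finset.image x (Finset.univ.erase k) := by
      simp only [Finset.mem_image]; rintro ⟨i, -, h⟩; exact hx1 i h
    rw [ek, Finset.prod_insert hC0, Finset.prod_insert hC1,
      Finset.prod_image (fun a ha b hb h => hinj h)]
    have hevk : f.eval (x k) = (1 - x k * x k) * ∏ i ∈ Finset.univ.erase k, (1 - x i * x k) := by
      rw [hev, ← Finset.mul_prod_erase Finset.univ _ (Finset.mem_univ k)]
    rw [hevk, show x k - 0 = x k from by ring, show x k - (-1) = x k + 1 from by ring]
    have hxk1 : x k + 1 ≠ 0 := fun h => h1x k (by linear_combination h)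
    rw [show (1:K) - x k * x k = (1 - x k) * (x k + 1) from by ring]
    rw [mul_inv, mul_inv]
    linear_combination ((1 - x k) * (x k)⁻¹ * (∏ i ∈ Finset.univ.erase k, (1 - x i * x k)) *
      (∏ i ∈ Finset.univ.erase k, (x k - x i))⁻¹) * mul_inv_cancel₀ hxk1
  rw [Finset.sum_congr rfl (fun k _ => tk k)] at hkey
  have hP : (∏ i, x i) ≠ 0 := Finset.prod_ne_zero_iff.mpr fun i _ => hx0 i
  have hcancel : (∏ i, x i) * (∏ i, x i)⁻¹ = 1 := mul_inv_cancel₀ hP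
  linear_combination hkey + (-1:K)^(n+1) * hcancel

lemma pairsplit {R : Type*} [CommRing R] {n : ℕ} (x : Fin n → R) (k : Fin n) :
    (-1:R)^(n+1) *
      (∏ p ∈ Finset.univ.filter (fun p : Fin n × Fin n => p.1 < p.2), (x p.2 - x p.1))
    = (-1:R)^(k:ℕ) *
      (∏ p ∈ Finset.univ.filter
          (fun p : Fin n × Fin n => p.1 < p.2 ∧ p.1 ≠ k ∧ p.2 ≠ k), (x p.2 - x p.1)) *
      (∏ i ∈ Finset.univ.erase k, (x k - x i)) := by
  set S1 := Finset.univ.filter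
    (fun p : Fin n × Fin n => p.1 < p.2 ∧ p.1 ≠ k ∧ p.2 ≠ k) with hS1
  set S2 := Finset.univ.filter (fun p : Fin n × Fin n => p.1 = k ∧ k < p.2) with hS2
  set S3 := Finset.univ.filter (fun p : Fin n × Fin n => p.2 = k ∧ p.1 < k) with hS3
  have hsplit : Finset.univ.filter (fun p : Fin n × Fin n => p.1 < p.2) = (S1 ∪ S2) ∪ S3 := by
    ext p
    simp only [hS1, hS2, hS3, Finset.mem_union, Finset.mem_filter, Finset.mem_univ, true_and,
      Fin.lt_def, ne_eq, Fin.ext_iff]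
    omega
  have hd12 : Disjoint S1 S2 := by
    rw [Finset.disjoint_left]
    intro p h1 h2
    simp only [hS1, hS2, Finset.mem_filter] at h1 h2
    exact h1.2.2.1 h2.2.1
  have hd3 : Disjoint (S1 ∪ S2) S3 := by
    rw [Finset.disjoint_left]
    intro p h1 h2
    simp only [hS1, hS2, hS3, Finset.mem_filter, Finset.mem_union] at h1 h2
    rcases h1 with ⟨-, -, -, hne2⟩ | ⟨-, -, hklt⟩
    · exact hne2 h2.2.1
    · exact lt_irrefl k (h2.2.1 ▸ hklt)
  have hp2 : ∏ p ∈ S2, (x p.2 - x p.1) = ∏ j ∈ Finset.Ioi k, (x j - x k) := by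
    refine Finset.prod_nbij' (fun p => p.2) (fun j => (k, j)) ?_ ?_ ?_ ?_ ?_
    · intro p hp; simp only [hS2, Finset.mem_filter] at hp
      simpa [Finset.mem_Ioi] using hp.2.2
    · intro j hj; simp only [hS2, Finset.mem_filter, Finset.mem_univ, true_and]
      exact Finset.mem_Ioi.mp hj
    · intro p hp; simp only [hS2, Finset.mem_filter] at hp
      exact Prod.ext hp.2.1.symm rfl
    · intro j _; rfl
    · intro p hp; simp only [hS2, Finset.mem_filter] at hp
      rw [hp.2.1]
  have hp3 : ∏ p ∈ S3, (x p.2 - x p.1) = ∏ i ∈ Finset.Iio k, (x k - x i) := by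
    refine Finset.prod_nbij' (fun p => p.1) (fun i => (i, k)) ?_ ?_ ?_ ?_ ?_
    · intro p hp; simp only [hS3, Finset.mem_filter] at hp
      simpa [Finset.mem_Iio] using hp.2.2
    · intro i hi; simp only [hS3, Finset.mem_filter, Finset.mem_univ, true_and]
      exact Finset.mem_Iio.mp hi
    · intro p hp; simp only [hS3, Finset.mem_filter] at hp
      exact Prod.ext rfl hp.2.1.symm
    · intro i _; rfl
    · intro p hp; simp only [hS3, Finset.mem_filter] at hp
      rw [hp.2.1]
  have herase : Finset.univ.erase k = Finset.Iio k ∪ Finset.Ioi k := by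
    ext i
    simp only [Finset.mem_erase, Finset.mem_univ, and_true, Finset.mem_union, Finset.mem_Iio,
      Finset.mem_Ioi]
    exact ne_iff_lt_or_gt
  have hdio : Disjoint (Finset.Iio k) (Finset.Ioi k) := by
    rw [Finset.disjoint_left]
    intro i h1 h2
    exact absurd (lt_trans (Finset.mem_Iio.mp h1) (Finset.mem_Ioi.mp h2)) (lt_irrefl i)
  have hEprod : ∏ i ∈ Finset.univ.erase k, (x k - x i)
      = (∏ i ∈ Finset.Iio k, (x k - x i)) *
        ((-1:R)^(n - 1 - (k:ℕ)) * ∏ j ∈ Finset.Ioi k, (x j - x k)) := by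
    rw [herase, Finset.prod_union hdio]
    congr 1
    rw [← Fin.card_Ioi k, ← Finset.prod_const (-1:R), ← Finset.prod_mul_distrib]
    exact Finset.prod_congr rfl fun j _ => by ring
  have hsign : (-1:R)^(n+1) = (-1:R)^(k:ℕ) * (-1:R)^(n - 1 - (k:ℕ)) := by
    have hk : (k:ℕ) < n := k.isLt
    have h2 : (k:ℕ) + (n - 1 - (k:ℕ)) + 2 = n + 1 := by omega
    rw [← pow_add, ← h2, pow_add, neg_one_sq, mul_one]
  rw [hsplit, Finset.prod_union hd3, Finset.prod_union hd12, hp2, hp3, hEprod, hsign]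
  ring

def bLHS {R : Type*} [CommRing R] {n : ℕ} (x : Fin n → R) : R :=
  ∑ k : Fin n, (-1:R)^(k:ℕ) * (1 - x k) * (∏ i ∈ Finset.univ.erase k, x i) *
    (∏ i ∈ Finset.univ.erase k, (1 - x i * x k)) *
    (∏ p ∈ Finset.univ.filter
        (fun p : Fin n × Fin n => p.1 < p.2 ∧ p.1 ≠ k ∧ p.2 ≠ k), (x p.2 - x p.1))

def bRHS {R : Type*} [CommRing R] {n : ℕ} (x : Fin n → R) : R :=
  (1 - ∏ i, x i) *
    ∏ p ∈ Finset.univ.filter (fun p : Fin n × Fin n => p.1 < p.2), (x p.2 - x p.1)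

lemma genericA {K : Type*} [Field K] {n : ℕ} (x : Fin n → K)
    (hinj : Function.Injective x) (hx0 : ∀ k, x k ≠ 0) (hx1 : ∀ k, x k ≠ -1) :
    bLHS x = bRHS x := by
  classical
  have hres := residue x hinj hx0 hx1
  have hP : (∏ i, x i) ≠ 0 := Finset.prod_ne_zero_iff.mpr fun i _ => hx0 i
  have hterm : ∀ k : Fin n,
      (-1:K)^(k:ℕ) * (1 - x k) * (∏ i ∈ Finset.univ.erase k, x i) *
        (∏ i ∈ Finset.univ.erase k, (1 - x i * x k)) *
        (∏ p ∈ Finset.univ.filter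
            (fun p : Fin n × Fin n => p.1 < p.2 ∧ p.1 ≠ k ∧ p.2 ≠ k), (x p.2 - x p.1))
      = ((-1:K)^(n+1) *
          (∏ p ∈ Finset.univ.filter (fun p : Fin n × Fin n => p.1 < p.2), (x p.2 - x p.1))) *
        (∏ i, x i) *
        ((1 - x k) * (x k)⁻¹ * (∏ i ∈ Finset.univ.erase k, (1 - x i * x k)) *
          (∏ i ∈ Finset.univ.erase k, (x k - x i))⁻¹) := by
    intro k
    have hxprod : x k * (∏ i ∈ Finset.univ.erase k, x i) = ∏ i, x i :=
      Finset.mul_prod_erase _ _ (Finset.mem_univ k)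
    have hEne : (∏ i ∈ Finset.univ.erase k, (x k - x i)) ≠ 0 :=
      Finset.prod_ne_zero_iff.mpr fun i hi =>
        sub_ne_zero.mpr (fun h => (Finset.ne_of_mem_erase hi) (hinj h).symm)
    have hxk : x k * (x k)⁻¹ = 1 := mul_inv_cancel₀ (hx0 k)
    have hE : (∏ i ∈ Finset.univ.erase k, (x k - x i)) *
        (∏ i ∈ Finset.univ.erase k, (x k - x i))⁻¹ = 1 := mul_inv_cancel₀ hEne
    rw [pairsplit x k, ← hxprod]
    linear_combination
      (-((-1:K)^(k:ℕ) * (1 - x k) * (∏ i ∈ Finset.univ.erase k, x i) *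
        (∏ i ∈ Finset.univ.erase k, (1 - x i * x k)) *
        (∏ p ∈ Finset.univ.filter
            (fun p : Fin n × Fin n => p.1 < p.2 ∧ p.1 ≠ k ∧ p.2 ≠ k), (x p.2 - x p.1)) *
        ((∏ i ∈ Finset.univ.erase k, (x k - x i)) *
          (∏ i ∈ Finset.univ.erase k, (x k - x i))⁻¹))) * hxk
      - ((-1:K)^(k:ℕ) * (1 - x k) * (∏ i ∈ Finset.univ.erase k, x i) *
        (∏ i ∈ Finset.univ.erase k, (1 - x i * x k)) *
        (∏ p ∈ Finset.univ.filter
            (fun p : Fin n × Fin n => p.1 < p.2 ∧ p.1 ≠ k ∧ p.2 ≠ k), (x p.2 - x p.1))) * hE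
  rw [bLHS, Finset.sum_congr rfl fun k _ => hterm k, ← Finset.mul_sum, hres, bRHS]
  have hcancel : (∏ i, x i) * (∏ i, x i)⁻¹ = 1 := mul_inv_cancel₀ hP
  have hs2 : (-1:K)^(n+1) * (-1:K)^(n+1) = 1 := by
    rw [← pow_add, show (n+1)+(n+1) = 2*(n+1) by ring, pow_mul, neg_one_sq, one_pow]
  set D := ∏ p ∈ Finset.univ.filter (fun p : Fin n × Fin n => p.1 < p.2), (x p.2 - x p.1)
  set P := ∏ i, x i
  linear_combination (D * (1 - P) * (P * P⁻¹)) * hs2 + (D * (1 - P)) * hcancel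

lemma map_bLHS {R S : Type*} [CommRing R] [CommRing S] (f : R →+* S) {n : ℕ} (x : Fin n → R) :
    f (bLHS x) = bLHS (fun i => f (x i)) := by
  simp only [bLHS, map_sum, map_mul, map_prod, map_sub, map_one, map_pow, map_neg]

lemma map_bRHS {R S : Type*} [CommRing R] [CommRing S] (f : R →+* S) {n : ℕ} (x : Fin n → R) :
    f (bRHS x) = bRHS (fun i => f (x i)) := by
  simp only [bRHS, map_sum, map_mul, map_prod, map_sub, map_one, map_pow, map_neg]

lemma polyB {K : Type*} [CommRing K] {n : ℕ} (x : Fin n → K) : bLHS x = bRHS x := by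
  classical
  set R := MvPolynomial (Fin n) ℤ
  let F := FractionRing R
  have halg : Function.Injective (algebraMap R F) := IsFractionRing.injective R F
  set X' : Fin n → F := fun i => algebraMap R F (MvPolynomial.X i) with hX'
  have hinj : Function.Injective X' := fun i j h =>
    MvPolynomial.X_injective (halg h)
  have hx0 : ∀ k, X' k ≠ 0 := by
    intro k h
    rw [hX', ← (algebraMap R F).map_zero] at h
    exact MvPolynomial.X_ne_zero k (halg h)
  have hx1 : ∀ k, X' k ≠ -1 := by
    intro k h
    have h2 : algebraMap R F (MvPolynomial.X k) = algebraMap R F (-1) := by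
      rw [map_neg, map_one]; exact h
    have h3 : (MvPolynomial.X k : R) = -1 := halg h2
    have h4 := congrArg MvPolynomial.constantCoeff h3
    simp at h4
  have hgen : bLHS X' = bRHS X' := genericA X' hinj hx0 hx1
  have hR : bLHS (fun i => (MvPolynomial.X i : R)) = bRHS (fun i => (MvPolynomial.X i : R)) := by
    apply halg
    rw [map_bLHS (algebraMap R F), map_bRHS (algebraMap R F)]
    exact hgen
  let φ : R →+* K := (MvPolynomial.aeval x).toRingHom
  have hmap := congrArg φ hR
  rw [map_bLHS φ, map_bRHS φ] at hmap
  have hφX : (fun i => φ (MvPolynomial.X i)) = x := by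
    funext i; exact MvPolynomial.aeval_X (R := ℤ) x i
  rwa [hφX] at hmap

/-- Lemma (3) of Bressoud's paper: for nonzero elements `x 1, ..., x n` of a field,
`x₁⋯xₙ · Σ_k (-1)^{k-1} (1-x_k) x_k⁻¹ ∏_{i≠k} (1-x_i x_k) ∏_{i<j, i,j≠k} (x_j-x_i)
 = (1 - x₁⋯xₙ) ∏_{i<j} (x_j - x_i)`. -/
theorem stmt0 {K : Type*} [Field K] {n : ℕ} (x : Fin n → K) (hx : ∀ k, x k ≠ 0) :
    (∏ i, x i) *
      ∑ k : Fin n, (-1 : K) ^ (k : ℕ) * (1 - x k) * (x k)⁻¹ *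
        (∏ i ∈ Finset.univ.erase k, (1 - x i * x k)) *
        (∏ p ∈ Finset.univ.filter
            (fun p : Fin n × Fin n => p.1 < p.2 ∧ p.1 ≠ k ∧ p.2 ≠ k),
          (x p.2 - x p.1)) =
    (1 - ∏ i, x i) *
      ∏ p ∈ Finset.univ.filter (fun p : Fin n × Fin n => p.1 < p.2),
        (x p.2 - x p.1) := by
  have hpoly := polyB x
  rw [Finset.mul_sum]
  have hterm : ∀ k : Fin n,
      (∏ i, x i) * ((-1 : K) ^ (k : ℕ) * (1 - x k) * (x k)⁻¹ *
        (∏ i ∈ Finset.univ.erase k, (1 - x i * x k)) *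
        (∏ p ∈ Finset.univ.filter
            (fun p : Fin n × Fin n => p.1 < p.2 ∧ p.1 ≠ k ∧ p.2 ≠ k),
          (x p.2 - x p.1)))
      = (-1:K)^(k:ℕ) * (1 - x k) * (∏ i ∈ Finset.univ.erase k, x i) *
        (∏ i ∈ Finset.univ.erase k, (1 - x i * x k)) *
        (∏ p ∈ Finset.univ.filter
            (fun p : Fin n × Fin n => p.1 < p.2 ∧ p.1 ≠ k ∧ p.2 ≠ k), (x p.2 - x p.1)) := by
    intro k
    have hxprod : x k * (∏ i ∈ Finset.univ.erase k, x i) = ∏ i, x i :=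
      Finset.mul_prod_erase _ _ (Finset.mem_univ k)
    have hxk : x k * (x k)⁻¹ = 1 := mul_inv_cancel₀ (hx k)
    rw [← hxprod]
    linear_combination ((-1:K)^(k:ℕ) * (1 - x k) * (∏ i ∈ Finset.univ.erase k, x i) *
      (∏ i ∈ Finset.univ.erase k, (1 - x i * x k)) *
      (∏ p ∈ Finset.univ.filter
          (fun p : Fin n × Fin n => p.1 < p.2 ∧ p.1 ≠ k ∧ p.2 ≠ k), (x p.2 - x p.1))) * hxk
  rw [Finset.sum_congr rfl fun k _ => hterm k]
  simp only [bLHS, bRHS] at hpoly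
  exact hpoly
end

section
/- Let F(x_1,...,x_n) = x_1⋯x_n · Σ_{k=1}^n (1-x_k) x_k^{-1} ∏_{i≠k} (1 - x_i x_k)/(x_i - x_k), viewed as a rational function in x_1,...,x_n with the x_i distinct. Then F(0, x_2,...,x_n) = 1. -/
/-- `F(x₁,...,xₙ) = x₁⋯xₙ Σ_k (1-x_k) x_k⁻¹ ∏_{i≠k} (1-x_i x_k)/(x_i-x_k)`,
written with the factor `x_k⁻¹` cleared against the prefactor
(i.e. `x₁⋯xₙ · x_k⁻¹ = ∏_{i≠k} x_i`), which is the polynomial extension of `F`. -/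
noncomputable def F {K : Type*} [Field K] {n : ℕ} (x : Fin n → K) : K :=
  ∑ k : Fin n, (1 - x k) * (∏ i ∈ Finset.univ.erase k, x i) *
    ∏ i ∈ Finset.univ.erase k, (1 - x i * x k) / (x i - x k)

/-- Setting the first variable to `0` in `F` gives `1` (the variables being distinct). -/
theorem stmt1 {K : Type*} [Field K] {n : ℕ} (x : Fin (n + 1) → K)
    (hinj : Function.Injective x) (h0 : x 0 = 0) :
    F x = 1 := by
  have hne : ∀ i : Fin (n+1), i ≠ 0 → x i ≠ 0 := by
    intro i hi hxi
    exact hi (hinj (hxi.trans h0.symm))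
  unfold F
  rw [Finset.sum_eq_single 0]
  · rw [h0]
    simp only [mul_zero, sub_zero, mul_one, sub_zero, one_mul]
    rw [← Finset.prod_mul_distrib]
    apply Finset.prod_eq_one
    intro i hi
    have : x i ≠ 0 := hne i (Finset.ne_of_mem_erase hi)
    field_simp
  · intro k _ hk
    have h0mem : (0 : Fin (n+1)) ∈ Finset.univ.erase k :=
      Finset.mem_erase.2 ⟨hk.symm, Finset.mem_univ _⟩
    rw [Finset.prod_eq_zero h0mem h0]
    ring
  · intro h; exact absurd (Finset.mem_univ _) h
end

section
/- Let F(x_1,...,x_n) = x_1⋯x_n · Σ_{k=1}^n (1-x_k) x_k^{-1} ∏_{i≠k} (1 - x_i x_k)/(x_i - x_k). Then F(1, x_2,...,x_n) = F(x_2,...,x_n), i.e. setting x_1 = 1 reduces F in n variables to F in the remaining n-1 variables. -/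
/-- Setting the first variable to `1` reduces `F` in `n+1` variables to `F` in the
remaining `n` variables (the variables being distinct). -/
theorem stmt2 {K : Type*} [Field K] {n : ℕ} (x : Fin (n + 1) → K)
    (hinj : Function.Injective x) (h1 : x 0 = 1) :
    F x = F (x ∘ Fin.succ) := by
  unfold F
  rw [Fin.sum_univ_succ]
  have h0 : (1 : K) - x 0 = 0 := by rw [h1]; ring
  rw [h0, zero_mul, zero_mul, zero_add]
  apply Finset.sum_congr rfl
  intro j _
  have hset : (Finset.univ.erase (Fin.succ j)) =
      insert (0 : Fin (n+1)) ((Finset.univ.erase j).image Fin.succ) := by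
    ext i
    simp only [Finset.mem_erase, Finset.mem_univ, Finset.mem_insert, Finset.mem_image,
      and_true, true_and]
    constructor
    · intro hi
      rcases Fin.eq_zero_or_eq_succ i with h | ⟨m, rfl⟩
      · exact Or.inl h
      · exact Or.inr ⟨m, fun h => hi (by rw [h]), rfl⟩
    · rintro (rfl | ⟨m, hm, rfl⟩)
      · exact (Fin.succ_ne_zero j).symm
      · exact fun h => hm (Fin.succ_injective _ h)
  have h0im : (0 : Fin (n+1)) ∉ (Finset.univ.erase j).image Fin.succ := by
    simp [Fin.succ_ne_zero, eq_comm]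
  have hinjsucc : ∀ a ∈ Finset.univ.erase j, ∀ b ∈ Finset.univ.erase j, Fin.succ a = Fin.succ b → a = b :=
    fun a _ b _ h => Fin.succ_injective _ h
  have hne : x 0 ≠ x (Fin.succ j) := fun h => (Fin.succ_ne_zero j).symm (hinj h)
  have hne1 : (1 : K) - x (Fin.succ j) ≠ 0 := by
    rw [h1] at hne; intro h; exact hne (by linear_combination h)
  rw [hset, Finset.prod_insert h0im, Finset.prod_insert h0im,
    Finset.prod_image hinjsucc, Finset.prod_image hinjsucc, h1, one_mul, one_mul,
    div_self hne1]
  simp [Function.comp]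
end

section
/- (Weyl denominator formula for type B_n) det(x_i^{j-1} - x_i^{2n-j})_{1≤i,j≤n} = ∏_{i=1}^n (1 - x_i) · ∏_{1≤i<j≤n} (x_i - x_j)(x_i x_j - 1). -/
namespace WeylBAux
open Polynomial Finset
open Polynomial Finset

variable {K : Type*} [CommRing K]

lemma dickson_coeff_of_lt : ∀ m k : ℕ, m < k → (dickson 1 (1:K) m).coeff k = 0
  | 0, k, hk => by
      have h0 : dickson 1 (1:K) 0 = Polynomial.C 2 := by
        rw [dickson_zero]; norm_num; exact (map_ofNat C 2).symm
      rw [h0, coeff_C, if_neg (by omega)]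
  | 1, k, hk => by
      rw [dickson_one, coeff_X, if_neg (by omega)]
  | (m+2), k, hk => by
      obtain ⟨k, rfl⟩ : ∃ k', k = k'+1 := ⟨k-1, by omega⟩
      rw [dickson_add_two, C_1, one_mul, coeff_sub, coeff_X_mul,
        dickson_coeff_of_lt (m+1) k (by omega), dickson_coeff_of_lt m (k+1) (by omega), sub_zero]

lemma dickson_coeff_self : ∀ m : ℕ, (dickson 1 (1:K) (m+1)).coeff (m+1) = 1
  | 0 => by rw [dickson_one, coeff_X_one]
  | (m+1) => by
      rw [dickson_add_two, C_1, one_mul, coeff_sub, coeff_X_mul,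
        dickson_coeff_self m, dickson_coeff_of_lt m (m+2) (by omega), sub_zero]

lemma gcoeff_of_lt (t k : ℕ) (h : t < k) :
    ((∑ m ∈ range (t+1), dickson 1 (1:K) m) - 1).coeff k = 0 := by
  rw [coeff_sub, coeff_one, if_neg (by omega), sub_zero, finset_sum_coeff]
  exact Finset.sum_eq_zero fun m hm =>
    dickson_coeff_of_lt m k (by rw [mem_range] at hm; omega)

lemma gcoeff_self (t : ℕ) :
    ((∑ m ∈ range (t+1), dickson 1 (1:K) m) - 1).coeff t = 1 := by
  rcases t with _ | s
  · simp [dickson_zero]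
    norm_num
  · rw [coeff_sub, coeff_one, if_neg (by omega), sub_zero, finset_sum_coeff,
      Finset.sum_range_succ, dickson_coeff_self s]
    rw [Finset.sum_eq_zero fun m hm =>
      dickson_coeff_of_lt m (s+1) (by rw [mem_range] at hm; omega), zero_add]

lemma keyE {K : Type*} [Field K] (x : K) (hx : x ≠ 0) (j t : ℕ) :
    x^j - x^(j+(2*t+1)) =
      (1-x) * x^(j+t) *
        Polynomial.eval (x + x⁻¹) ((∑ m ∈ Finset.range (t+1), Polynomial.dickson 1 1 m) - 1) := by
  have hxi : x * x⁻¹ = 1 := mul_inv_cancel₀ hx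
  rw [eval_sub, eval_one, eval_finset_sum]
  rw [Finset.sum_congr rfl fun m _ => dickson_one_one_eval_add_inv x x⁻¹ hxi m]
  have h2 : ∀ m ∈ range (t+1), x^(j+t) * (x⁻¹)^m = x^(j+(t-m)) := by
    intro m hm; rw [mem_range] at hm
    have h4 : x^(j+t) = x^(j+(t-m)) * x^m := by rw [← pow_add]; congr 1; omega
    rw [h4, mul_assoc, ← mul_pow, hxi, one_pow, mul_one]
  have h5 : ∑ m ∈ range (t+1), x^(j+(t-m)) = ∑ m ∈ range (t+1), x^(j+m) := by
    have := Finset.sum_range_reflect (fun m => x^(j+m)) (t+1)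
    simpa using this
  have h3 : x^(j+t) * ((∑ m ∈ range (t+1), (x^m + (x⁻¹)^m)) - 1)
      = (x^(j+t) + x^j) * (∑ m ∈ range (t+1), x^m) - x^(j+t) := by
    rw [mul_sub, mul_one, Finset.mul_sum]
    simp_rw [mul_add]
    rw [Finset.sum_add_distrib, Finset.sum_congr rfl h2, h5]
    simp_rw [pow_add]
    rw [← Finset.mul_sum, ← Finset.mul_sum]
    ring
  rw [mul_assoc, h3]
  have hG := geom_sum_mul x (t+1)
  linear_combination (x^(j+t)+x^j) * hG

lemma prod_pairs {M : Type*} [CommMonoid M] {n : ℕ} (f : Fin n → Fin n → M) :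
    ∏ p ∈ Finset.univ.filter (fun p : Fin n × Fin n => p.1 < p.2), f p.1 p.2
      = ∏ i, ∏ j ∈ Ioi i, f i j := by
  symm
  rw [Finset.prod_sigma']
  exact Finset.prod_nbij' (fun p => (p.1, p.2)) (fun p => ⟨p.1, p.2⟩)
    (by simp) (by simp) (by simp) (by simp) (by simp)

lemma prod_pairs' {M : Type*} [CommMonoid M] {n : ℕ} (f : Fin n → Fin n → M) :
    ∏ p ∈ Finset.univ.filter (fun p : Fin n × Fin n => p.1 < p.2), f p.1 p.2
      = ∏ j, ∏ i ∈ Iio j, f i j := by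
  symm
  rw [Finset.prod_sigma']
  exact Finset.prod_nbij' (fun p => (p.2, p.1)) (fun p => ⟨p.2, p.1⟩)
    (by simp) (by simp) (by simp) (by simp) (by simp)

lemma prod_pairs_revmap {M : Type*} [CommMonoid M] {n : ℕ} (f : Fin n → Fin n → M) :
    ∏ p ∈ Finset.univ.filter (fun p : Fin n × Fin n => p.1 < p.2), f p.1 p.2
      = ∏ p ∈ Finset.univ.filter (fun p : Fin n × Fin n => p.1 < p.2), f p.2.rev p.1.rev :=
  Finset.prod_nbij' (fun p => (p.2.rev, p.1.rev)) (fun p => (p.2.rev, p.1.rev))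
    (by simp [Fin.rev_lt_rev]) (by simp [Fin.rev_lt_rev])
    (by simp) (by simp) (by simp)

lemma prod_pow_card {K : Type*} [CommMonoid K] {n : ℕ} (x : Fin n → K) :
    ∏ p ∈ Finset.univ.filter (fun p : Fin n × Fin n => p.1 < p.2), (x p.1 * x p.2)
      = ∏ i, x i ^ (n-1) := by
  rw [Finset.prod_mul_distrib, prod_pairs (f := fun i _ => x i), prod_pairs' (f := fun _ j => x j)]
  simp_rw [Finset.prod_const, Fin.card_Ioi, Fin.card_Iio]
  rw [← Finset.prod_mul_distrib]
  refine Finset.prod_congr rfl fun i _ => ?_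
  have := i.isLt
  rw [← pow_add]
  congr 1
  omega

lemma keyfield {K : Type*} [Field K] {n : ℕ} (x : Fin n → K) (hx : ∀ i, x i ≠ 0) :
    Matrix.det (fun i j : Fin n => x i ^ (j : ℕ) - x i ^ (2 * n - 1 - (j : ℕ))) =
      (∏ i, (1 - x i)) *
        ∏ p ∈ Finset.univ.filter (fun p : Fin n × Fin n => p.1 < p.2),
          (x p.1 - x p.2) * (x p.1 * x p.2 - 1) := by
  rcases Nat.eq_zero_or_pos n with hn | hn
  · subst hn
    exact Matrix.det_fin_zero.trans (by simp)
  set z : Fin n → K := fun i => x i + (x i)⁻¹ with hz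
  set g : Fin n → K[X] :=
    fun j => (∑ m ∈ range (n - 1 - (j : ℕ) + 1), dickson 1 (1:K) m) - 1 with hg
  have hB : ∀ (i j : Fin n),
      (∑ l : Fin n, z i ^ (n - 1 - (l : ℕ)) * (g j).coeff (n - 1 - (l : ℕ)))
        = (g j).eval (z i) := by
    intro i j
    have hdeg : (g j).natDegree < n := by
      have h1 : (g j).natDegree ≤ n - 1 - (j : ℕ) :=
        natDegree_le_iff_coeff_eq_zero.mpr (fun N hN => gcoeff_of_lt _ _ hN)
      omega
    rw [eval_eq_sum_range' hdeg]
    rw [Fin.sum_univ_eq_sum_range (fun l => z i ^ (n - 1 - l) * (g j).coeff (n - 1 - l)) n]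
    calc ∑ l ∈ range n, z i ^ (n - 1 - l) * (g j).coeff (n - 1 - l)
        = ∑ l ∈ range n, (g j).coeff (n - 1 - l) * z i ^ (n - 1 - l) := by
          simp_rw [mul_comm]
      _ = ∑ l ∈ range n, (g j).coeff l * z i ^ l :=
          Finset.sum_range_reflect (fun l => (g j).coeff l * z i ^ l) n
  have hA : (fun i j : Fin n => x i ^ (j : ℕ) - x i ^ (2 * n - 1 - (j : ℕ)))
      = Matrix.diagonal (fun i => (1 - x i) * x i ^ (n - 1)) *
        ((Matrix.of fun i l : Fin n => z i ^ (n - 1 - (l : ℕ))) *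
         (Matrix.of fun l j : Fin n => (g j).coeff (n - 1 - (l : ℕ)))) := by
    ext i j
    rw [Matrix.diagonal_mul, Matrix.mul_apply]
    simp only [Matrix.of_apply]
    rw [hB i j]
    have hj : (j : ℕ) < n := j.isLt
    have hE := keyE (x i) (hx i) (j : ℕ) (n - 1 - (j : ℕ))
    rw [show (j : ℕ) + (2 * (n - 1 - (j : ℕ)) + 1) = 2 * n - 1 - (j : ℕ) from by omega,
      show (j : ℕ) + (n - 1 - (j : ℕ)) = n - 1 from by omega] at hE
    exact hE
  rw [hA, Matrix.det_mul, Matrix.det_mul, Matrix.det_diagonal]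
  have hT : (Matrix.of fun l j : Fin n => (g j).coeff (n - 1 - (l : ℕ))).det = 1 := by
    have hlt : (Matrix.of fun l j : Fin n => (g j).coeff (n - 1 - (l : ℕ))).BlockTriangular
        OrderDual.toDual := by
      intro i j hij
      have h3 : (i : ℕ) < (j : ℕ) := hij
      have hj : (j : ℕ) < n := j.isLt
      exact gcoeff_of_lt _ _ (by omega)
    rw [Matrix.det_of_lowerTriangular _ hlt]
    exact Finset.prod_eq_one fun l _ => gcoeff_self (K := K) (n - 1 - (l : ℕ))
  have hW : (Matrix.of fun i l : Fin n => z i ^ (n - 1 - (l : ℕ))).det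
      = ∏ p ∈ Finset.univ.filter (fun p : Fin n × Fin n => p.1 < p.2), (z p.1 - z p.2) := by
    have hsub : (Matrix.of fun i l : Fin n => z i ^ (n - 1 - (l : ℕ)))
        = (Matrix.vandermonde (fun i : Fin n => z i.rev)).submatrix
            (Fin.revPerm : Equiv.Perm (Fin n)) Fin.revPerm := by
      ext i l
      simp only [Matrix.of_apply, Matrix.submatrix_apply, Matrix.vandermonde_apply,
        Fin.revPerm_apply, Fin.rev_rev]
      congr 1
      rw [Fin.val_rev]
      omega
    rw [hsub, Matrix.det_submatrix_equiv_self, Matrix.det_vandermonde]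
    rw [← prod_pairs (f := fun a b => z b.rev - z a.rev)]
    rw [prod_pairs_revmap (f := fun a b => z b.rev - z a.rev)]
    simp only [Fin.rev_rev]
  rw [hT, hW, mul_one]
  rw [Finset.prod_mul_distrib, mul_assoc]
  congr 1
  rw [← prod_pow_card x, ← Finset.prod_mul_distrib]
  refine Finset.prod_congr rfl fun p _ => ?_
  have h1 := hx p.1
  have h2 := hx p.2
  simp only [hz]
  field_simp
  ring

lemma transfer {A B : Type*} [CommRing A] [CommRing B] (φ : A →+* B) {n : ℕ} (y : Fin n → A)
    (h : Matrix.det (fun i j : Fin n => y i ^ (j : ℕ) - y i ^ (2 * n - 1 - (j : ℕ))) =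
      (∏ i, (1 - y i)) *
        ∏ p ∈ Finset.univ.filter (fun p : Fin n × Fin n => p.1 < p.2),
          (y p.1 - y p.2) * (y p.1 * y p.2 - 1)) :
    Matrix.det (fun i j : Fin n => φ (y i) ^ (j : ℕ) - φ (y i) ^ (2 * n - 1 - (j : ℕ))) =
      (∏ i, (1 - φ (y i))) *
        ∏ p ∈ Finset.univ.filter (fun p : Fin n × Fin n => p.1 < p.2),
          (φ (y p.1) - φ (y p.2)) * (φ (y p.1) * φ (y p.2) - 1) := by
  have hM : (fun i j : Fin n => φ (y i) ^ (j : ℕ) - φ (y i) ^ (2 * n - 1 - (j : ℕ)))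
      = (Matrix.of fun i j : Fin n => y i ^ (j : ℕ) - y i ^ (2 * n - 1 - (j : ℕ))).map φ := by
    ext i j
    simp [Matrix.map_apply]
  have hM2 : (Matrix.of fun i j : Fin n => y i ^ (j : ℕ) - y i ^ (2 * n - 1 - (j : ℕ))).map φ
      = φ.mapMatrix (Matrix.of fun i j : Fin n => y i ^ (j : ℕ) - y i ^ (2 * n - 1 - (j : ℕ))) := by
    ext i j
    simp [Matrix.map_apply, RingHom.mapMatrix_apply]
  rw [hM, hM2, ← RingHom.map_det]
  rw [show Matrix.det (Matrix.of fun i j : Fin n => y i ^ (j : ℕ) - y i ^ (2 * n - 1 - (j : ℕ)))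
      = (∏ i, (1 - y i)) *
        ∏ p ∈ Finset.univ.filter (fun p : Fin n × Fin n => p.1 < p.2),
          (y p.1 - y p.2) * (y p.1 * y p.2 - 1) from h]
  rw [map_mul, map_prod, map_prod]
  simp only [map_sub, map_one, map_mul]

lemma keyMv (n : ℕ) :
    Matrix.det (fun i j : Fin n =>
        (MvPolynomial.X i : MvPolynomial (Fin n) ℤ) ^ (j : ℕ)
          - MvPolynomial.X i ^ (2 * n - 1 - (j : ℕ))) =
      (∏ i, (1 - (MvPolynomial.X i : MvPolynomial (Fin n) ℤ))) *
        ∏ p ∈ Finset.univ.filter (fun p : Fin n × Fin n => p.1 < p.2),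
          (MvPolynomial.X p.1 - MvPolynomial.X p.2) *
            (MvPolynomial.X p.1 * MvPolynomial.X p.2 - 1) := by
  set P := MvPolynomial (Fin n) ℤ
  set L := FractionRing P
  have hinj : Function.Injective (algebraMap P L) := IsFractionRing.injective P L
  apply hinj
  have hz : ∀ i : Fin n, algebraMap P L (MvPolynomial.X i) ≠ 0 := fun i h0 =>
    MvPolynomial.X_ne_zero i (hinj (by simpa using h0))
  rw [RingHom.map_det (algebraMap P L) (fun i j : Fin n =>
      (MvPolynomial.X i : P) ^ (j : ℕ) - MvPolynomial.X i ^ (2 * n - 1 - (j : ℕ))),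
    map_mul, map_prod, map_prod]
  simp only [RingHom.mapMatrix_apply, map_sub, map_one, map_mul]
  have hM : (Matrix.map (fun i j : Fin n =>
        (MvPolynomial.X i : P) ^ (j : ℕ) - MvPolynomial.X i ^ (2 * n - 1 - (j : ℕ)))
        (algebraMap P L))
      = fun i j : Fin n => (algebraMap P L (MvPolynomial.X i)) ^ (j : ℕ)
          - (algebraMap P L (MvPolynomial.X i)) ^ (2 * n - 1 - (j : ℕ)) := by
    funext i j
    change algebraMap P L ((MvPolynomial.X i : P) ^ (j : ℕ) - MvPolynomial.X i ^ (2 * n - 1 - (j : ℕ))) = _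
    simp [Matrix.map_apply]
  exact (congrArg Matrix.det hM).trans (keyfield _ hz)


end WeylBAux
open WeylBAux in
/-- Weyl denominator formula for the root system `Bₙ`:
`det(xᵢ^{j-1} - xᵢ^{2n-j}) = ∏ᵢ (1-xᵢ) ∏_{i<j} (xᵢ-xⱼ)(xᵢxⱼ-1)`
(here `j` is 0-indexed, so the exponents are `j` and `2n-1-j`). -/
theorem stmt3 {R : Type*} [CommRing R] {n : ℕ} (x : Fin n → R) :
    Matrix.det (fun i j : Fin n => x i ^ (j : ℕ) - x i ^ (2 * n - 1 - (j : ℕ))) =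
      (∏ i, (1 - x i)) *
        ∏ p ∈ Finset.univ.filter (fun p : Fin n × Fin n => p.1 < p.2),
          (x p.1 - x p.2) * (x p.1 * x p.2 - 1) := by
  have h := transfer (MvPolynomial.eval₂Hom (Int.castRingHom R) x)
    (fun i : Fin n => MvPolynomial.X i) (keyMv n)
  simpa using h
end

section
/- There is a size-preserving bijection between symmetric plane partitions contained in [1,n]×[1,n]×[1,m] and column-strict plane partitions with y-coordinates ≤ m and z-coordinates ≤ 2n-1 in which every non-empty column has odd height. -/
/-- `P` is a plane partition: a finite down-closed subset of `ℕ₊³`. -/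
def IsPP (P : Finset (ℕ × ℕ × ℕ)) : Prop :=
  (∀ p ∈ P, 1 ≤ p.1 ∧ 1 ≤ p.2.1 ∧ 1 ≤ p.2.2) ∧
  ∀ p ∈ P, ∀ i j k : ℕ, 1 ≤ i → i ≤ p.1 → 1 ≤ j → j ≤ p.2.1 → 1 ≤ k → k ≤ p.2.2 →
    (i, j, k) ∈ P

/-- The height of the column of `P` at position `(i,j)`. -/
def colHeight (P : Finset (ℕ × ℕ × ℕ)) (i j : ℕ) : ℕ :=
  (P.filter (fun p => p.1 = i ∧ p.2.1 = j)).card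

/-- `P` is a symmetric plane partition contained in the box `[1,n]×[1,n]×[1,m]`. -/
def IsSymBox (n m : ℕ) (P : Finset (ℕ × ℕ × ℕ)) : Prop :=
  IsPP P ∧ (∀ p ∈ P, p.1 ≤ n ∧ p.2.1 ≤ n ∧ p.2.2 ≤ m) ∧
    ∀ i j k : ℕ, (i, j, k) ∈ P ↔ (j, i, k) ∈ P

/-- `Q` is a column-strict plane partition with `y`-coordinates `≤ m` and
`z`-coordinates `≤ 2n-1`, all of whose non-empty columns have odd height. -/
def IsCSOdd (n m : ℕ) (Q : Finset (ℕ × ℕ × ℕ)) : Prop :=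
  IsPP Q ∧ (∀ p ∈ Q, p.2.1 ≤ m ∧ p.2.2 ≤ 2 * n - 1) ∧
    (∀ h i j : ℕ, 1 ≤ h → h < i → (∃ k, (i, j, k) ∈ Q) →
      colHeight Q i j < colHeight Q h j) ∧
    ∀ i j : ℕ, (∃ k, (i, j, k) ∈ Q) → Odd (colHeight Q i j)

namespace Stmt14Aux

/-- A down-closed (above `x`) finset of naturals is an interval. -/
lemma eq_Ico_of_dc (T : Finset ℕ) (x : ℕ) (h1 : ∀ y ∈ T, x ≤ y)
    (h2 : ∀ y ∈ T, ∀ y', x ≤ y' → y' ≤ y → y' ∈ T) :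
    T = Finset.Ico x (x + T.card) := by
  rcases T.eq_empty_or_nonempty with h | h
  · simp [h]
  · have hM := T.max'_mem h
    have hxM : x ≤ T.max' h := h1 _ hM
    have hT : T = Finset.Icc x (T.max' h) := by
      ext y
      simp only [Finset.mem_Icc]
      exact ⟨fun hy => ⟨h1 y hy, Finset.le_max' T y hy⟩, fun hy => h2 _ hM y hy.1 hy.2⟩
    rw [hT, Nat.card_Icc]
    ext y
    simp only [Finset.mem_Icc, Finset.mem_Ico]
    omega

def sup3 (P : Finset (ℕ × ℕ × ℕ)) : ℕ := P.sup fun p => p.1 ⊔ p.2.1 ⊔ p.2.2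

def bnd (P : Finset (ℕ × ℕ × ℕ)) : ℕ := sup3 P + P.card + 1

lemma le_sup3 {P : Finset (ℕ × ℕ × ℕ)} {p : ℕ × ℕ × ℕ} (hp : p ∈ P) :
    p.1 ≤ sup3 P ∧ p.2.1 ≤ sup3 P ∧ p.2.2 ≤ sup3 P := by
  have h : p.1 ⊔ p.2.1 ⊔ p.2.2 ≤ sup3 P :=
    Finset.le_sup (f := fun q : ℕ × ℕ × ℕ => q.1 ⊔ q.2.1 ⊔ q.2.2) hp
  simp only [sup_le_iff] at h
  omega

lemma sup3_le_bnd (P : Finset (ℕ × ℕ × ℕ)) : sup3 P + P.card + 1 ≤ bnd P := by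
  unfold bnd; omega

/-! ### Rows of a symmetric plane partition -/

def rowSet (P : Finset (ℕ × ℕ × ℕ)) (i k : ℕ) : Finset ℕ :=
  (P.filter fun p => p.1 = i ∧ p.2.2 = k ∧ i ≤ p.2.1).image fun p => p.2.1

def rP (P : Finset (ℕ × ℕ × ℕ)) (i k : ℕ) : ℕ := (rowSet P i k).card

lemma mem_rowSet {P : Finset (ℕ × ℕ × ℕ)} {i k y : ℕ} :
    y ∈ rowSet P i k ↔ (i, y, k) ∈ P ∧ i ≤ y := by
  simp only [rowSet, Finset.mem_image, Finset.mem_filter]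
  constructor
  · rintro ⟨⟨a, b, c⟩, ⟨hp, rfl, rfl, h3⟩, rfl⟩
    exact ⟨hp, h3⟩
  · rintro ⟨h1, h2⟩
    exact ⟨(i, y, k), ⟨h1, rfl, rfl, h2⟩, rfl⟩

lemma rP_le_card (P : Finset (ℕ × ℕ × ℕ)) (i k : ℕ) : rP P i k ≤ P.card :=
  le_trans Finset.card_image_le (Finset.card_filter_le _ _)

lemma rowSet_eq {n m : ℕ} {P : Finset (ℕ × ℕ × ℕ)} (hP : IsSymBox n m P) (i k : ℕ) :
    rowSet P i k = Finset.Ico i (i + rP P i k) := by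
  apply eq_Ico_of_dc
  · intro y hy; exact (mem_rowSet.mp hy).2
  · intro y hy y' h1 h2
    rw [mem_rowSet] at hy ⊢
    refine ⟨?_, h1⟩
    obtain ⟨ha, hb, hc⟩ := hP.1.1 _ hy.1
    have ha' : (1:ℕ) ≤ i := ha
    have hc' : (1:ℕ) ≤ k := hc
    exact hP.1.2 _ hy.1 i y' k ha' le_rfl (le_trans ha' h1) h2 hc' le_rfl

lemma mem_row {n m : ℕ} {P : Finset (ℕ × ℕ × ℕ)} (hP : IsSymBox n m P) (x y z : ℕ) :
    (x, y, z) ∈ P ↔ 1 ≤ x ∧ 1 ≤ y ∧ 1 ≤ z ∧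
      (x ≤ y → y < x + rP P x z) ∧ (y < x → x < y + rP P y z) := by
  constructor
  · intro h
    obtain ⟨hx, hy, hz⟩ := hP.1.1 _ h
    refine ⟨hx, hy, hz, ?_, ?_⟩
    · intro hxy
      have hm : y ∈ rowSet P x z := mem_rowSet.mpr ⟨h, hxy⟩
      rw [rowSet_eq hP, Finset.mem_Ico] at hm
      exact hm.2
    · intro hyx
      have h' : (y, x, z) ∈ P := (hP.2.2 x y z).mp h
      have hm : x ∈ rowSet P y z := mem_rowSet.mpr ⟨h', le_of_lt hyx⟩
      rw [rowSet_eq hP, Finset.mem_Ico] at hm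
      exact hm.2
  · rintro ⟨hx, hy, hz, h1, h2⟩
    rcases le_or_gt x y with hxy | hyx
    · have hm : y ∈ rowSet P x z := by
        rw [rowSet_eq hP, Finset.mem_Ico]; exact ⟨hxy, h1 hxy⟩
      exact (mem_rowSet.mp hm).1
    · have hm : x ∈ rowSet P y z := by
        rw [rowSet_eq hP, Finset.mem_Ico]; exact ⟨le_of_lt hyx, h2 hyx⟩
      exact (hP.2.2 y x z).mp (mem_rowSet.mp hm).1

lemma top_mem {n m : ℕ} {P : Finset (ℕ × ℕ × ℕ)} (hP : IsSymBox n m P) {i k : ℕ}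
    (h : 1 ≤ rP P i k) : (i, i + rP P i k - 1, k) ∈ P := by
  have hm : i + rP P i k - 1 ∈ rowSet P i k := by
    rw [rowSet_eq hP, Finset.mem_Ico]; omega
  exact (mem_rowSet.mp hm).1

lemma rP_mono {n m : ℕ} {P : Finset (ℕ × ℕ × ℕ)} (hP : IsSymBox n m P) {i' i k' k : ℕ}
    (h1 : 1 ≤ i') (h2 : i' ≤ i) (h3 : 1 ≤ k') (h4 : k' ≤ k) (h5 : 1 ≤ rP P i k) :
    rP P i k + (i - i') ≤ rP P i' k' := by
  have htop := top_mem hP h5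
  obtain ⟨hx, hy, hz⟩ := hP.1.1 _ htop
  have hy' : (1:ℕ) ≤ i + rP P i k - 1 := hy
  have hdown : (i', i + rP P i k - 1, k') ∈ P :=
    hP.1.2 _ htop i' (i + rP P i k - 1) k' h1 h2 hy' le_rfl h3 h4
  have hm : i + rP P i k - 1 ∈ rowSet P i' k' := mem_rowSet.mpr ⟨hdown, by omega⟩
  rw [rowSet_eq hP, Finset.mem_Ico] at hm
  omega

/-! ### Columns -/

def colSet (Q : Finset (ℕ × ℕ × ℕ)) (i j : ℕ) : Finset ℕ :=
  (Q.filter fun p => p.1 = i ∧ p.2.1 = j).image fun p => p.2.2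

lemma mem_colSet {Q : Finset (ℕ × ℕ × ℕ)} {i j l : ℕ} :
    l ∈ colSet Q i j ↔ (i, j, l) ∈ Q := by
  simp only [colSet, Finset.mem_image, Finset.mem_filter]
  constructor
  · rintro ⟨⟨a, b, c⟩, ⟨hp, rfl, rfl⟩, rfl⟩
    exact hp
  · intro h
    exact ⟨(i, j, l), ⟨h, rfl, rfl⟩, rfl⟩

lemma colHeight_eq (Q : Finset (ℕ × ℕ × ℕ)) (i j : ℕ) :
    colHeight Q i j = (colSet Q i j).card := by
  unfold colHeight colSet
  rw [Finset.card_image_of_injOn]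
  rintro ⟨a, b, c⟩ hp ⟨a', b', c'⟩ hq h
  simp only [Finset.mem_coe, Finset.mem_filter] at hp hq
  obtain ⟨-, rfl, rfl⟩ := hp
  obtain ⟨-, rfl, rfl⟩ := hq
  simp only at h
  rw [h]

lemma colSet_eq {Q : Finset (ℕ × ℕ × ℕ)} (hQ : IsPP Q) (i j : ℕ) :
    colSet Q i j = Finset.Ico 1 (1 + colHeight Q i j) := by
  rw [colHeight_eq]
  apply eq_Ico_of_dc
  · intro l hl; exact (hQ.1 _ (mem_colSet.mp hl)).2.2
  · intro l hl l' hl1 hl2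
    rw [mem_colSet] at hl ⊢
    obtain ⟨ha, hb, hc⟩ := hQ.1 _ hl
    have ha' : (1:ℕ) ≤ i := ha
    have hb' : (1:ℕ) ≤ j := hb
    exact hQ.2 _ hl i j l' ha' le_rfl hb' le_rfl hl1 hl2

lemma mem_col {Q : Finset (ℕ × ℕ × ℕ)} (hQ : IsPP Q) (i j l : ℕ) :
    (i, j, l) ∈ Q ↔ 1 ≤ i ∧ 1 ≤ j ∧ 1 ≤ l ∧ l ≤ colHeight Q i j := by
  constructor
  · intro h
    obtain ⟨ha, hb, hc⟩ := hQ.1 _ h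
    have hm : l ∈ colSet Q i j := mem_colSet.mpr h
    rw [colSet_eq hQ, Finset.mem_Ico] at hm
    exact ⟨ha, hb, hc, by omega⟩
  · rintro ⟨ha, hb, hc, hd⟩
    have hm : l ∈ colSet Q i j := by
      rw [colSet_eq hQ, Finset.mem_Ico]; omega
    exact mem_colSet.mp hm

lemma colHeight_le_card (Q : Finset (ℕ × ℕ × ℕ)) (i j : ℕ) :
    colHeight Q i j ≤ Q.card := by
  unfold colHeight; exact Finset.card_filter_le _ _

lemma col_nonempty {Q : Finset (ℕ × ℕ × ℕ)} {i j : ℕ} (h : 1 ≤ colHeight Q i j) :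
    ∃ l, (i, j, l) ∈ Q := by
  have hpos : 0 < (colSet Q i j).card := by rw [← colHeight_eq]; omega
  obtain ⟨l, hl⟩ := Finset.card_pos.mp hpos
  exact ⟨l, mem_colSet.mp hl⟩

/-! ### The forward map `F` -/

def F (P : Finset (ℕ × ℕ × ℕ)) : Finset (ℕ × ℕ × ℕ) :=
  ((Finset.Icc 1 (bnd P)) ×ˢ (Finset.Icc 1 (bnd P)) ×ˢ (Finset.Icc 1 (2 * bnd P))).filter
    fun q => q.2.2 ≤ 2 * rP P q.1 q.2.1 - 1

lemma mem_F {n m : ℕ} {P : Finset (ℕ × ℕ × ℕ)} (hP : IsSymBox n m P) (i k l : ℕ) :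
    (i, k, l) ∈ F P ↔ 1 ≤ i ∧ 1 ≤ k ∧ 1 ≤ l ∧ l ≤ 2 * rP P i k - 1 := by
  simp only [F, Finset.mem_filter, Finset.mem_product, Finset.mem_Icc]
  constructor
  · rintro ⟨⟨⟨hi1, _⟩, ⟨hk1, _⟩, ⟨hl1, _⟩⟩, h⟩
    exact ⟨hi1, hk1, hl1, h⟩
  · rintro ⟨hi, hk, hl, h⟩
    have hr : 1 ≤ rP P i k := by omega
    obtain ⟨y, hy⟩ := Finset.card_pos.mp (show 0 < (rowSet P i k).card from hr)
    obtain ⟨hmem, hiy⟩ := mem_rowSet.mp hy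
    obtain ⟨b1, b2, b3⟩ := le_sup3 hmem
    have hb1 : i ≤ sup3 P := b1
    have hb3 : k ≤ sup3 P := b3
    have hrc := rP_le_card P i k
    have hcb := sup3_le_bnd P
    exact ⟨⟨⟨hi, by omega⟩, ⟨hk, by omega⟩, ⟨hl, by omega⟩⟩, h⟩

lemma colSet_F {n m : ℕ} {P : Finset (ℕ × ℕ × ℕ)} (hP : IsSymBox n m P) (i k : ℕ) :
    colSet (F P) i k = Finset.Ico 1 (2 * rP P i k) := by
  ext l
  rw [mem_colSet, mem_F hP, Finset.mem_Ico]
  constructor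
  · rintro ⟨_, _, h3, h4⟩; omega
  · intro h
    refine ⟨?_, ?_, by omega, by omega⟩
    · -- 1 ≤ i : rP P i k ≥ 1, so row nonempty, so i ≥ 1
      have hr : 1 ≤ rP P i k := by omega
      obtain ⟨y, hy⟩ := Finset.card_pos.mp (show 0 < (rowSet P i k).card from hr)
      obtain ⟨hmem, -⟩ := mem_rowSet.mp hy
      exact (hP.1.1 _ hmem).1
    · have hr : 1 ≤ rP P i k := by omega
      obtain ⟨y, hy⟩ := Finset.card_pos.mp (show 0 < (rowSet P i k).card from hr)
      obtain ⟨hmem, -⟩ := mem_rowSet.mp hy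
      exact (hP.1.1 _ hmem).2.2

lemma colHeight_F {n m : ℕ} {P : Finset (ℕ × ℕ × ℕ)} (hP : IsSymBox n m P) (i k : ℕ) :
    colHeight (F P) i k = 2 * rP P i k - 1 := by
  rw [colHeight_eq, colSet_F hP, Nat.card_Ico]

lemma F_CSOdd {n m : ℕ} {P : Finset (ℕ × ℕ × ℕ)} (hP : IsSymBox n m P) :
    IsCSOdd n m (F P) := by
  refine ⟨⟨?_, ?_⟩, ?_, ?_, ?_⟩
  · rintro ⟨i, k, l⟩ hp
    rw [mem_F hP] at hp
    exact ⟨hp.1, hp.2.1, hp.2.2.1⟩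
  · rintro ⟨i, k, l⟩ hp i' k' l' h1 h2 h3 h4 h5 h6
    rw [mem_F hP] at hp
    obtain ⟨hi, hk, hl, h⟩ := hp
    have h2' : i' ≤ i := h2
    have h4' : k' ≤ k := h4
    have h6' : l' ≤ l := h6
    rw [mem_F hP]
    have hr : 1 ≤ rP P i k := by omega
    have := rP_mono hP h1 h2' h3 h4' hr
    exact ⟨h1, h3, h5, by omega⟩
  · rintro ⟨i, k, l⟩ hp
    rw [mem_F hP] at hp
    obtain ⟨hi, hk, hl, h⟩ := hp
    have hr : 1 ≤ rP P i k := by omega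
    have htop := top_mem hP hr
    have hbox := hP.2.1 _ htop
    have hb1 : i + rP P i k - 1 ≤ n := hbox.2.1
    have hb2 : k ≤ m := hbox.2.2
    show k ≤ m ∧ l ≤ 2 * n - 1
    exact ⟨hb2, by omega⟩
  · intro h i j hh hhi hex
    obtain ⟨l, hl⟩ := hex
    rw [mem_F hP] at hl
    obtain ⟨hi, hj, hl1, hl2⟩ := hl
    have hr : 1 ≤ rP P i j := by omega
    have := rP_mono hP (i' := h) (i := i) (k' := j) (k := j) hh (le_of_lt hhi) hj le_rfl hr
    rw [colHeight_F hP, colHeight_F hP]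
    omega
  · intro i j hex
    obtain ⟨l, hl⟩ := hex
    rw [mem_F hP] at hl
    obtain ⟨hi, hj, hl1, hl2⟩ := hl
    have hr : 1 ≤ rP P i j := by omega
    rw [colHeight_F hP, Nat.odd_iff]
    omega

lemma card_F {n m : ℕ} {P : Finset (ℕ × ℕ × ℕ)} (hP : IsSymBox n m P) :
    (F P).card = P.card := by
  apply Finset.card_nbij'
    (i := fun q => if q.2.2 ≤ rP P q.1 q.2.1 then (q.1, q.1 + q.2.2 - 1, q.2.1)
           else (q.1 + (q.2.2 - rP P q.1 q.2.1), q.1, q.2.1))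
    (j := fun p => if p.1 ≤ p.2.1 then (p.1, p.2.2, p.2.1 - p.1 + 1)
           else (p.2.1, p.2.2, rP P p.2.1 p.2.2 + (p.1 - p.2.1)))
  · rintro ⟨i, k, l⟩ hq
    rw [Finset.mem_coe, mem_F hP] at hq
    obtain ⟨hi, hk, hl, h⟩ := hq
    have hr : 1 ≤ rP P i k := by omega
    dsimp only
    split_ifs with hcase
    · rw [Finset.mem_coe, mem_row hP]
      refine ⟨hi, by omega, hk, fun _ => by omega, fun hcon => absurd hcon (by omega)⟩
    · rw [Finset.mem_coe, mem_row hP]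
      refine ⟨by omega, hi, hk, fun hcon => absurd hcon (by omega), fun _ => by omega⟩
  · rintro ⟨x, y, z⟩ hp
    rw [Finset.mem_coe, mem_row hP] at hp
    obtain ⟨hx, hy, hz, h1, h2⟩ := hp
    dsimp only
    split_ifs with hcase
    · have := h1 hcase
      rw [Finset.mem_coe, mem_F hP]
      refine ⟨hx, hz, by omega, by omega⟩
    · have := h2 (by omega)
      have hr : 1 ≤ rP P y z := by omega
      rw [Finset.mem_coe, mem_F hP]
      refine ⟨hy, hz, by omega, by omega⟩
  · rintro ⟨i, k, l⟩ hq
    rw [Finset.mem_coe, mem_F hP] at hq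
    obtain ⟨hi, hk, hl, h⟩ := hq
    have hr : 1 ≤ rP P i k := by omega
    dsimp only
    rcases le_or_gt l (rP P i k) with hcase | hcase
    · rw [if_pos hcase]
      dsimp only
      rw [if_pos (show i ≤ i + l - 1 by omega)]
      simp only [Prod.mk.injEq, true_and, and_true]
      omega
    · rw [if_neg (show ¬ l ≤ rP P i k by omega)]
      dsimp only
      rw [if_neg (show ¬ (i + (l - rP P i k) ≤ i) by omega)]
      simp only [Prod.mk.injEq, true_and, and_true]
      omega
  · rintro ⟨x, y, z⟩ hp
    rw [Finset.mem_coe, mem_row hP] at hp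
    obtain ⟨hx, hy, hz, h1, h2⟩ := hp
    dsimp only
    rcases le_or_gt x y with hcase | hcase
    · have hxr := h1 hcase
      rw [if_pos hcase]
      dsimp only
      rw [if_pos (show y - x + 1 ≤ rP P x z by omega)]
      simp only [Prod.mk.injEq, true_and, and_true]
      omega
    · have hyr := h2 hcase
      have hr : 1 ≤ rP P y z := by omega
      rw [if_neg (show ¬ x ≤ y by omega)]
      dsimp only
      rw [if_neg (show ¬ (rP P y z + (x - y) ≤ rP P y z) by omega)]
      simp only [Prod.mk.injEq, true_and, and_true]
      omega


/-! ### The inverse map `G` -/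

def sQ (Q : Finset (ℕ × ℕ × ℕ)) (i k : ℕ) : ℕ := (colHeight Q i k + 1) / 2

lemma odd_col {n m : ℕ} {Q : Finset (ℕ × ℕ × ℕ)} (hQ : IsCSOdd n m Q) {i k : ℕ}
    (h : 1 ≤ colHeight Q i k) : colHeight Q i k % 2 = 1 := by
  obtain ⟨l, hl⟩ := col_nonempty h
  exact Nat.odd_iff.mp (hQ.2.2.2 i k ⟨l, hl⟩)

lemma sQ_spec {n m : ℕ} {Q : Finset (ℕ × ℕ × ℕ)} (hQ : IsCSOdd n m Q) (i k : ℕ) :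
    (colHeight Q i k = 0 ∧ sQ Q i k = 0) ∨ 2 * sQ Q i k = colHeight Q i k + 1 := by
  rcases Nat.eq_zero_or_pos (colHeight Q i k) with h | h
  · left
    refine ⟨h, ?_⟩
    unfold sQ; omega
  · right
    have := odd_col hQ h
    unfold sQ; omega

lemma col_mono {n m : ℕ} {Q : Finset (ℕ × ℕ × ℕ)} (hQ : IsCSOdd n m Q) {i k' k : ℕ}
    (h3 : 1 ≤ k') (h4 : k' ≤ k) (h : 1 ≤ colHeight Q i k) :
    colHeight Q i k ≤ colHeight Q i k' := by
  have htop : (i, k, colHeight Q i k) ∈ Q := by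
    obtain ⟨l, hl⟩ := col_nonempty h
    obtain ⟨ha, hb, hc⟩ := hQ.1.1 _ hl
    exact (mem_col hQ.1 i k _).mpr ⟨ha, hb, h, le_rfl⟩
  obtain ⟨ha, hb, hc⟩ := hQ.1.1 _ htop
  have ha' : (1:ℕ) ≤ i := ha
  have hdown : (i, k', colHeight Q i k) ∈ Q :=
    hQ.1.2 _ htop i k' (colHeight Q i k) ha' le_rfl h3 h4 h le_rfl
  exact ((mem_col hQ.1 i k' _).mp hdown).2.2.2

lemma col_step {n m : ℕ} {Q : Finset (ℕ × ℕ × ℕ)} (hQ : IsCSOdd n m Q) {h i k : ℕ}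
    (hh : 1 ≤ h) (hhi : h < i) (hc : 1 ≤ colHeight Q i k) :
    colHeight Q i k + 2 ≤ colHeight Q h k := by
  have hex : ∃ l, (i, k, l) ∈ Q := col_nonempty hc
  have hlt := hQ.2.2.1 h i k hh hhi hex
  have ho1 := odd_col hQ hc
  have ho2 := odd_col hQ (i := h) (k := k) (by omega)
  omega

lemma col_chain {n m : ℕ} {Q : Finset (ℕ × ℕ × ℕ)} (hQ : IsCSOdd n m Q) {i' i k : ℕ}
    (h1 : 1 ≤ i') (h2 : i' ≤ i) (hc : 1 ≤ colHeight Q i k) :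
    colHeight Q i k + 2 * (i - i') ≤ colHeight Q i' k := by
  induction i, h2 using Nat.le_induction with
  | base => omega
  | succ j hij IH =>
    have hstep := col_step hQ (h := j) (i := j + 1) (k := k) (by omega) (by omega) hc
    have := IH (by omega)
    omega

lemma sQ_mono {n m : ℕ} {Q : Finset (ℕ × ℕ × ℕ)} (hQ : IsCSOdd n m Q) {i' i k' k : ℕ}
    (h1 : 1 ≤ i') (h2 : i' ≤ i) (h3 : 1 ≤ k') (h4 : k' ≤ k) (h5 : 1 ≤ sQ Q i k) :
    sQ Q i k + (i - i') ≤ sQ Q i' k' := by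
  have hc : 1 ≤ colHeight Q i k := by unfold sQ at h5; omega
  have hm := col_mono hQ h3 h4 hc
  have hch := col_chain hQ h1 h2 (k := k') (by omega)
  unfold sQ
  omega

def G (Q : Finset (ℕ × ℕ × ℕ)) : Finset (ℕ × ℕ × ℕ) :=
  ((Finset.Icc 1 (bnd Q)) ×ˢ (Finset.Icc 1 (bnd Q)) ×ˢ (Finset.Icc 1 (bnd Q))).filter
    fun q => (q.1 ≤ q.2.1 → q.2.1 < q.1 + sQ Q q.1 q.2.2) ∧
             (q.2.1 < q.1 → q.1 < q.2.1 + sQ Q q.2.1 q.2.2)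

lemma sQ_bnd {n m : ℕ} {Q : Finset (ℕ × ℕ × ℕ)} (hQ : IsCSOdd n m Q) (u v : ℕ)
    (hs : 1 ≤ sQ Q u v) : u ≤ sup3 Q ∧ v ≤ sup3 Q ∧ sQ Q u v ≤ Q.card := by
  have hc : 1 ≤ colHeight Q u v := by unfold sQ at hs; omega
  obtain ⟨l, hl⟩ := col_nonempty hc
  obtain ⟨b1, b2, b3⟩ := le_sup3 hl
  have hb1 : u ≤ sup3 Q := b1
  have hb2 : v ≤ sup3 Q := b2
  have hcc := colHeight_le_card Q u v
  have ho := odd_col hQ hc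
  refine ⟨hb1, hb2, ?_⟩
  unfold sQ
  omega

lemma mem_G {n m : ℕ} {Q : Finset (ℕ × ℕ × ℕ)} (hQ : IsCSOdd n m Q) (x y z : ℕ) :
    (x, y, z) ∈ G Q ↔ 1 ≤ x ∧ 1 ≤ y ∧ 1 ≤ z ∧
      (x ≤ y → y < x + sQ Q x z) ∧ (y < x → x < y + sQ Q y z) := by
  simp only [G, Finset.mem_filter, Finset.mem_product, Finset.mem_Icc]
  constructor
  · rintro ⟨⟨⟨a, _⟩, ⟨b, _⟩, ⟨c, _⟩⟩, h1, h2⟩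
    exact ⟨a, b, c, h1, h2⟩
  · rintro ⟨hx, hy, hz, h1, h2⟩
    have hcard := sup3_le_bnd Q
    rcases le_or_gt x y with hxy | hyx
    · have hlt := h1 hxy
      have hs : 1 ≤ sQ Q x z := by omega
      obtain ⟨bx, bz, bs⟩ := sQ_bnd hQ x z hs
      exact ⟨⟨⟨hx, by omega⟩, ⟨hy, by omega⟩, ⟨hz, by omega⟩⟩, h1, h2⟩
    · have hlt := h2 hyx
      have hs : 1 ≤ sQ Q y z := by omega
      obtain ⟨hby, bz, bs⟩ := sQ_bnd hQ y z hs
      exact ⟨⟨⟨hx, by omega⟩, ⟨hy, by omega⟩, ⟨hz, by omega⟩⟩, h1, h2⟩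

lemma G_SymBox {n m : ℕ} {Q : Finset (ℕ × ℕ × ℕ)} (hQ : IsCSOdd n m Q) :
    IsSymBox n m (G Q) := by
  have hbound : ∀ u v : ℕ, 1 ≤ u → 1 ≤ v → 1 ≤ sQ Q u v → sQ Q u v + (u - 1) ≤ n ∧ v ≤ m := by
    intro u v hu hv hs
    have h1 := sQ_mono hQ (i' := 1) (i := u) (k' := v) (k := v) le_rfl hu hv le_rfl hs
    have hs1 : 1 ≤ sQ Q 1 v := by omega
    have hc1 : 1 ≤ colHeight Q 1 v := by unfold sQ at hs1; omega
    have htop : (1, v, colHeight Q 1 v) ∈ Q :=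
      (mem_col hQ.1 1 v _).mpr ⟨le_rfl, hv, hc1, le_rfl⟩
    have hbox := hQ.2.1 _ htop
    have hb1 : v ≤ m := hbox.1
    have hb2 : colHeight Q 1 v ≤ 2 * n - 1 := hbox.2
    constructor
    · unfold sQ at h1 ⊢
      omega
    · exact hb1
  refine ⟨⟨?_, ?_⟩, ?_, ?_⟩
  · rintro ⟨x, y, z⟩ hp
    rw [mem_G hQ] at hp
    exact ⟨hp.1, hp.2.1, hp.2.2.1⟩
  · rintro ⟨x, y, z⟩ hp x' y' z' ha1 ha2 hb1 hb2 hc1 hc2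
    rw [mem_G hQ] at hp
    obtain ⟨hx, hy, hz, h1, h2⟩ := hp
    have ha2' : x' ≤ x := ha2
    have hb2' : y' ≤ y := hb2
    have hc2' : z' ≤ z := hc2
    rw [mem_G hQ]
    refine ⟨ha1, hb1, hc1, ?_, ?_⟩
    · intro hxy'
      rcases le_or_gt x y with hxy | hyx
      · have hlt := h1 hxy
        have hs1 : 1 ≤ sQ Q x z := by omega
        have := sQ_mono hQ ha1 ha2' hc1 hc2' hs1
        omega
      · have hlt := h2 hyx
        have hs1 : 1 ≤ sQ Q y z := by omega
        have := sQ_mono hQ (i' := x') (i := y) ha1 (by omega) hc1 hc2' hs1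
        omega
    · intro hyx'
      rcases le_or_gt x y with hxy | hyx
      · have hlt := h1 hxy
        have hs1 : 1 ≤ sQ Q x z := by omega
        have := sQ_mono hQ (i' := y') (i := x) hb1 (by omega) hc1 hc2' hs1
        omega
      · have hlt := h2 hyx
        have hs1 : 1 ≤ sQ Q y z := by omega
        have := sQ_mono hQ (i' := y') (i := y) hb1 (by omega) hc1 hc2' hs1
        omega
  · rintro ⟨x, y, z⟩ hp
    rw [mem_G hQ] at hp
    obtain ⟨hx, hy, hz, h1, h2⟩ := hp
    show x ≤ n ∧ y ≤ n ∧ z ≤ m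
    rcases le_or_gt x y with hxy | hyx
    · have hlt := h1 hxy
      have hs : 1 ≤ sQ Q x z := by omega
      obtain ⟨hn, hm⟩ := hbound x z hx hz hs
      exact ⟨by omega, by omega, hm⟩
    · have hlt := h2 hyx
      have hs : 1 ≤ sQ Q y z := by omega
      obtain ⟨hn, hm⟩ := hbound y z hy hz hs
      exact ⟨by omega, by omega, hm⟩
  · intro i j k
    rw [mem_G hQ, mem_G hQ]
    constructor <;>
    · rintro ⟨h1, h2, h3, h4, h5⟩
      refine ⟨h2, h1, h3, ?_, ?_⟩
      · intro hle
        rcases eq_or_lt_of_le hle with heq | hlt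
        · subst heq
          exact h4 le_rfl
        · exact h5 hlt
      · intro hlt
        exact h4 (le_of_lt hlt)

/-! ### The two compositions -/

lemma rP_G {n m : ℕ} {Q : Finset (ℕ × ℕ × ℕ)} (hQ : IsCSOdd n m Q) (i k : ℕ)
    (hi : 1 ≤ i) (hk : 1 ≤ k) : rP (G Q) i k = sQ Q i k := by
  have hrow : rowSet (G Q) i k = Finset.Ico i (i + sQ Q i k) := by
    ext y
    rw [mem_rowSet, mem_G hQ, Finset.mem_Ico]
    constructor
    · rintro ⟨⟨_, _, _, h1, _⟩, hiy⟩
      exact ⟨hiy, h1 hiy⟩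
    · rintro ⟨hy1, hy2⟩
      exact ⟨⟨hi, by omega, hk, fun _ => hy2, fun hcon => absurd hcon (by omega)⟩, hy1⟩
  unfold rP
  rw [hrow, Nat.card_Ico]
  omega

lemma F_G {n m : ℕ} {Q : Finset (ℕ × ℕ × ℕ)} (hQ : IsCSOdd n m Q) : F (G Q) = Q := by
  have hG := G_SymBox hQ
  ext p
  obtain ⟨i, k, l⟩ := p
  rw [mem_F hG, mem_col hQ.1]
  constructor
  · rintro ⟨hi, hk, hl, h⟩
    rw [rP_G hQ i k hi hk] at h
    rcases sQ_spec hQ i k with ⟨h1, h2⟩ | h1 <;>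
      exact ⟨hi, hk, hl, by omega⟩
  · rintro ⟨hi, hk, hl, h⟩
    rw [rP_G hQ i k hi hk]
    rcases sQ_spec hQ i k with ⟨h1, h2⟩ | h1 <;>
      exact ⟨hi, hk, hl, by omega⟩

lemma sQ_F {n m : ℕ} {P : Finset (ℕ × ℕ × ℕ)} (hP : IsSymBox n m P) (i k : ℕ) :
    sQ (F P) i k = rP P i k := by
  unfold sQ
  rw [colHeight_F hP]
  omega

lemma G_F {n m : ℕ} {P : Finset (ℕ × ℕ × ℕ)} (hP : IsSymBox n m P) : G (F P) = P := by
  have hF := F_CSOdd hP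
  ext p
  obtain ⟨x, y, z⟩ := p
  rw [mem_G hF, mem_row hP]
  constructor
  · rintro ⟨hx, hy, hz, h1, h2⟩
    refine ⟨hx, hy, hz, ?_, ?_⟩
    · intro h; have := h1 h; rwa [sQ_F hP] at this
    · intro h; have := h2 h; rwa [sQ_F hP] at this
  · rintro ⟨hx, hy, hz, h1, h2⟩
    refine ⟨hx, hy, hz, ?_, ?_⟩
    · intro h; have := h1 h; rwa [sQ_F hP]
    · intro h; have := h2 h; rwa [sQ_F hP]

end Stmt14Aux

/-- There is a size-preserving bijection between symmetric plane partitions in the box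
`[1,n]×[1,n]×[1,m]` and column-strict plane partitions with `y ≤ m`, `z ≤ 2n-1` all of
whose non-empty columns have odd height. -/
theorem stmt14 (n m : ℕ) :
    ∃ e : {P : Finset (ℕ × ℕ × ℕ) // IsSymBox n m P} ≃
          {Q : Finset (ℕ × ℕ × ℕ) // IsCSOdd n m Q},
      ∀ P, ((e P : Finset (ℕ × ℕ × ℕ))).card = (P : Finset (ℕ × ℕ × ℕ)).card := by
  classical
  refine ⟨⟨fun P => ⟨Stmt14Aux.F P.1, Stmt14Aux.F_CSOdd P.2⟩,
           fun Q => ⟨Stmt14Aux.G Q.1, Stmt14Aux.G_SymBox Q.2⟩, ?_, ?_⟩, ?_⟩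
  · intro P
    exact Subtype.ext (Stmt14Aux.G_F P.2)
  · intro Q
    exact Subtype.ext (Stmt14Aux.F_G Q.2)
  · intro P
    exact Stmt14Aux.card_F P.2
end

section
/- The generating function for symmetric plane partitions contained in the box [1,n]×[1,n]×[1,m] equals Σ_{λ ⊆ (m^n)} s_λ(q^{2n-1}, q^{2n-3}, ..., q^3, q), the sum of Schur polynomials over partitions fitting in an n×m rectangle evaluated at the odd powers of q. -/
set_option linter.unusedSectionVars false
set_option linter.unusedVariables false
set_option maxHeartbeats 1000000

/-- The Schur polynomial `s_λ(x₁,...,xₙ)`, as a sum over semistandard Young tableaux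
of shape `λ` (given as the sequence of row lengths) with entries in `{1,...,n}`. -/
def schur {K : Type*} [CommRing K] {n : ℕ} (lam : Fin n → ℕ) (x : Fin n → K) : K :=
  ∑ T ∈ Finset.univ.filter
      (fun T : ((i : Fin n) × Fin (lam i)) → Fin n =>
        (∀ (i : Fin n) (j j' : Fin (lam i)), (j : ℕ) ≤ (j' : ℕ) → T ⟨i, j⟩ ≤ T ⟨i, j'⟩) ∧
        (∀ (i i' : Fin n) (j : Fin (lam i)) (j' : Fin (lam i')),
          i < i' → (j : ℕ) = (j' : ℕ) → T ⟨i, j⟩ < T ⟨i', j'⟩)),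
    ∏ a : Fin n, x a ^ (Finset.univ.filter (fun c => T c = a)).card

namespace Stmt15Aux

open Finset
open scoped Classical

/-- A down-closed finset of naturals bounded below by `c` is an initial segment. -/
lemma dcCard (S : Finset ℕ) (c : ℕ) (h1 : ∀ x ∈ S, c ≤ x)
    (h2 : ∀ x ∈ S, ∀ y, c ≤ y → y ≤ x → y ∈ S) {x : ℕ} (hx : c ≤ x) :
    x ∈ S ↔ x < c + S.card := by
  constructor
  · intro hxS
    have hsub : Finset.Icc c x ⊆ S := fun y hy => by
      rw [Finset.mem_Icc] at hy; exact h2 x hxS y hy.1 hy.2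
    have := Finset.card_le_card hsub
    rw [Nat.card_Icc] at this; omega
  · intro h
    by_contra hxS
    have hsub : S ⊆ Finset.Ico c x := fun y hy => by
      rw [Finset.mem_Ico]
      refine ⟨h1 y hy, ?_⟩
      by_contra hxy
      exact hxS (h2 y hy x hx (by omega))
    have := Finset.card_le_card hsub
    rw [Nat.card_Ico] at this; omega

/-- Down-closed subsets of `Fin c` are initial segments. -/
lemma finSeg {c : ℕ} (p : Fin c → Prop) (hp : ∀ (k k' : Fin c), k ≤ k' → p k' → p k)
    (k : Fin c) : p k ↔ (k : ℕ) < (Finset.univ.filter p).card := by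
  classical
  set S : Finset ℕ := (Finset.range c).filter (fun x => ∃ hx : x < c, p ⟨x, hx⟩) with hS
  have hcard : (Finset.univ.filter p).card = S.card := by
    rw [Finset.card_filter, Finset.card_filter, ← Fin.sum_univ_eq_sum_range]
    apply Finset.sum_congr rfl
    intro x _
    congr 1
    simp only [eq_iff_iff]
    constructor
    · intro hx; exact ⟨x.isLt, by simpa [Fin.eta] using hx⟩
    · rintro ⟨hx, hpx⟩; simpa [Fin.eta] using hpx
  have hmem : (k : ℕ) ∈ S ↔ p k := by
    simp only [hS, Finset.mem_filter, Finset.mem_range]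
    constructor
    · rintro ⟨-, hx, hpx⟩; simpa [Fin.eta] using hpx
    · intro hpk; exact ⟨k.isLt, k.isLt, by simpa [Fin.eta] using hpk⟩
  have := dcCard S 0 (fun x _ => Nat.zero_le x)
    (fun x hx y _ hyx => by
      simp only [hS, Finset.mem_filter, Finset.mem_range] at hx ⊢
      obtain ⟨hxc, hx2, hpx⟩ := hx
      have hyc : y < c := by omega
      exact ⟨hyc, hyc, hp ⟨y, hyc⟩ ⟨x, hx2⟩ hyx hpx⟩)
    (Nat.zero_le (k : ℕ))
  rw [hcard, ← hmem, this]
  omega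

lemma finCardLt (c d : ℕ) (h : d ≤ c) :
    (Finset.univ.filter (fun k : Fin c => (k : ℕ) < d)).card = d := by
  rw [Finset.card_filter, Fin.sum_univ_eq_sum_range (fun x => if x < d then 1 else 0) c,
    ← Finset.card_filter]
  have : (Finset.range c).filter (fun x => x < d) = Finset.range d := by
    ext x; simp only [Finset.mem_filter, Finset.mem_range]; omega
  rw [this, Finset.card_range]

variable {m n : ℕ}

noncomputable def hext (h : Fin n → Fin n → Fin (m + 1)) (i : Fin n) (l : ℕ) : ℕ :=
  if hl : l < n then (h i ⟨l, hl⟩ : ℕ) else 0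

noncomputable def arm (h : Fin n → Fin n → Fin (m + 1)) (i : Fin n) (k : ℕ) : ℕ :=
  ((Finset.Ico ((i : ℕ) + 1) n).filter (fun l => k < hext h i l)).card

section h
variable {h : Fin n → Fin n → Fin (m + 1)}
variable (hsym : ∀ i j, h i j = h j i) (hmono : ∀ i i' j : Fin n, i ≤ i' → h i' j ≤ h i j)

include hsym hmono in
lemma hmono2 {i j j' : Fin n} (hjj : j ≤ j') : h i j' ≤ h i j := by
  rw [hsym i j', hsym i j]; exact hmono j j' i hjj

lemma hext_eq (i j : Fin n) : hext h i (j : ℕ) = h i j := by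
  simp [hext, j.isLt]

include hsym hmono in
lemma hext_anti (i : Fin n) {l l' : ℕ} (hll : l ≤ l') : hext h i l' ≤ hext h i l := by
  unfold hext
  split
  · next hl' =>
    have hl : l < n := lt_of_le_of_lt hll hl'
    rw [dif_pos hl]
    have := hmono2 hsym hmono (i := i) (j := (⟨l, hl⟩ : Fin n)) (j' := ⟨l', hl'⟩) hll
    exact_mod_cast this
  · omega

lemma arm_le (i : Fin n) (k : ℕ) : arm h i k ≤ n - ((i : ℕ) + 1) := by
  calc arm h i k ≤ (Finset.Ico ((i : ℕ) + 1) n).card := Finset.card_filter_le _ _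
  _ = n - ((i : ℕ) + 1) := Nat.card_Ico _ _

lemma arm_anti (i : Fin n) {k k' : ℕ} (hkk : k ≤ k') : arm h i k' ≤ arm h i k := by
  apply Finset.card_le_card
  intro l hl
  rw [Finset.mem_filter] at hl ⊢
  exact ⟨hl.1, by omega⟩

include hsym hmono in
lemma arm_spec {i j : Fin n} (hij : (i : ℕ) < (j : ℕ)) (k : ℕ) :
    k < (h i j : ℕ) ↔ (j : ℕ) < (i : ℕ) + 1 + arm h i k := by
  have key := dcCard (((Finset.Ico ((i : ℕ) + 1) n).filter (fun l => k < hext h i l)))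
    ((i : ℕ) + 1)
    (fun x hx => by rw [Finset.mem_filter, Finset.mem_Ico] at hx; omega)
    (fun x hx y hy hyx => by
      rw [Finset.mem_filter, Finset.mem_Ico] at hx ⊢
      refine ⟨⟨hy, by omega⟩, ?_⟩
      have := hext_anti hsym hmono i hyx
      omega)
    (x := (j : ℕ)) (by omega)
  rw [Finset.mem_filter, Finset.mem_Ico] at key
  rw [show ((Finset.Ico ((i : ℕ) + 1) n).filter (fun l => k < hext h i l)).card = arm h i k from rfl] at key
  constructor
  · intro hk
    exact key.mp ⟨⟨by omega, j.isLt⟩, by rwa [hext_eq]⟩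
  · intro hj
    have := (key.mpr hj).2
    rwa [hext_eq] at this

include hmono in
lemma arm_strict {i i' : Fin n} (hii : (i : ℕ) < (i' : ℕ)) {k : ℕ} (hk : k < (h i' i' : ℕ)) :
    arm h i' k < arm h i k := by
  have hsub : insert (i' : ℕ) ((Finset.Ico ((i' : ℕ) + 1) n).filter (fun l => k < hext h i' l))
      ⊆ (Finset.Ico ((i : ℕ) + 1) n).filter (fun l => k < hext h i l) := by
    intro l hl
    rw [Finset.mem_insert] at hl
    rw [Finset.mem_filter, Finset.mem_Ico]
    rcases hl with rfl | hl
    · refine ⟨⟨by omega, i'.isLt⟩, ?_⟩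
      rw [hext_eq]
      have h1 : h i' i' ≤ h i i' := hmono i i' i' (by exact_mod_cast le_of_lt hii)
      have h1' : (h i' i' : ℕ) ≤ (h i i' : ℕ) := h1
      omega
    · rw [Finset.mem_filter, Finset.mem_Ico] at hl
      refine ⟨⟨by omega, hl.1.2⟩, ?_⟩
      have hln : l < n := hl.1.2
      have h2 := hl.2
      unfold hext at h2 ⊢
      rw [dif_pos hln] at h2 ⊢
      have h3 : h i' ⟨l, hln⟩ ≤ h i ⟨l, hln⟩ := hmono i i' _ (by exact_mod_cast le_of_lt hii)
      have h3' : (h i' ⟨l, hln⟩ : ℕ) ≤ (h i ⟨l, hln⟩ : ℕ) := h3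
      omega
  have hni : (i' : ℕ) ∉ (Finset.Ico ((i' : ℕ) + 1) n).filter (fun l => k < hext h i' l) := by
    rw [Finset.mem_filter, Finset.mem_Ico]; omega
  have := Finset.card_le_card hsub
  rw [Finset.card_insert_of_notMem hni] at this
  unfold arm
  omega

noncomputable def sumw (h : Fin n → Fin n → Fin (m + 1)) : ℕ :=
  ∑ i : Fin n, ∑ j : Fin n, (h i j : ℕ)

include hsym in
lemma sum_offdiag :
    ∑ p ∈ Finset.univ.filter (fun p : Fin n × Fin n => p.2 < p.1), (h p.1 p.2 : ℕ) =
    ∑ p ∈ Finset.univ.filter (fun p : Fin n × Fin n => p.1 < p.2), (h p.1 p.2 : ℕ) := by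
  apply Finset.sum_nbij' (i := Prod.swap) (j := Prod.swap)
  · intro p hp; simp only [Finset.mem_filter, Finset.mem_univ, true_and] at hp ⊢; exact hp
  · intro p hp; simp only [Finset.mem_filter, Finset.mem_univ, true_and] at hp ⊢; exact hp
  · intro p _; simp
  · intro p _; simp
  · intro p _; rw [hsym]; rfl

include hsym in
lemma sum_split :
    sumw h = ∑ i : Fin n, (h i i : ℕ) +
      2 * ∑ p ∈ Finset.univ.filter (fun p : Fin n × Fin n => p.1 < p.2), (h p.1 p.2 : ℕ) := by
  have h0 : sumw h = ∑ p : Fin n × Fin n, (h p.1 p.2 : ℕ) := by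
    rw [Fintype.sum_prod_type]; rfl
  rw [h0, ← Finset.sum_filter_add_sum_filter_not Finset.univ (fun p : Fin n × Fin n => p.1 < p.2),
    ← Finset.sum_filter_add_sum_filter_not (Finset.univ.filter (fun p : Fin n × Fin n => ¬ p.1 < p.2))
      (fun p : Fin n × Fin n => p.2 < p.1)]
  have e1 : (Finset.univ.filter (fun p : Fin n × Fin n => ¬ p.1 < p.2)).filter
      (fun p : Fin n × Fin n => p.2 < p.1) =
      Finset.univ.filter (fun p : Fin n × Fin n => p.2 < p.1) := by
    rw [Finset.filter_filter]
    apply Finset.filter_congr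
    intro p _
    simp only [and_iff_right_iff_imp]
    intro h'; exact lt_asymm h'
  have e2 : (Finset.univ.filter (fun p : Fin n × Fin n => ¬ p.1 < p.2)).filter
      (fun p : Fin n × Fin n => ¬ p.2 < p.1) =
      Finset.univ.filter (fun p : Fin n × Fin n => p.1 = p.2) := by
    rw [Finset.filter_filter]
    apply Finset.filter_congr
    intro p _
    constructor
    · rintro ⟨h1', h2'⟩; exact le_antisymm (le_of_not_gt h2') (le_of_not_gt h1')
    · intro h'; exact ⟨by rw [h']; exact lt_irrefl _, by rw [h']; exact lt_irrefl _⟩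
  have e3 : ∑ p ∈ Finset.univ.filter (fun p : Fin n × Fin n => p.1 = p.2), (h p.1 p.2 : ℕ) =
      ∑ i : Fin n, (h i i : ℕ) := by
    apply Finset.sum_nbij' (i := fun p => p.1) (j := fun i => (i, i))
    · intro p _; exact Finset.mem_univ _
    · intro i _; exact Finset.mem_filter.mpr ⟨Finset.mem_univ _, rfl⟩
    · intro p hp
      simp only [Finset.mem_filter, Finset.mem_univ, true_and] at hp
      exact Prod.ext rfl hp
    · intro i _; rfl
    · intro p hp
      simp only [Finset.mem_filter, Finset.mem_univ, true_and] at hp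
      rw [hp]
  rw [e1, e2, e3, sum_offdiag hsym]
  ring

include hsym hmono in
lemma row_count (i : Fin n) :
    ∑ j : Fin n, (if i < j then (h i j : ℕ) else 0) =
      ∑ k ∈ Finset.range ((h i i : ℕ)), arm h i k := by
  have step1 : ∑ j : Fin n, (if i < j then (h i j : ℕ) else 0) =
      ∑ l ∈ Finset.Ico ((i : ℕ) + 1) n, hext h i l :=
    calc ∑ j : Fin n, (if i < j then (h i j : ℕ) else 0)
        = ∑ j : Fin n, (fun l => if (i : ℕ) < l then hext h i l else 0) (j : ℕ) := by
          apply Finset.sum_congr rfl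
          intro j _
          simp only [Fin.lt_def, hext_eq]
      _ = ∑ l ∈ Finset.range n, (if (i : ℕ) < l then hext h i l else 0) := by
          simpa using Fin.sum_univ_eq_sum_range (fun l => if (i : ℕ) < l then hext h i l else 0) n
      _ = ∑ l ∈ (Finset.range n).filter (fun l => (i : ℕ) < l), hext h i l :=
          (Finset.sum_filter _ _).symm
      _ = ∑ l ∈ Finset.Ico ((i : ℕ) + 1) n, hext h i l := by
          apply Finset.sum_congr _ (fun _ _ => rfl)
          ext l; simp only [Finset.mem_filter, Finset.mem_range, Finset.mem_Ico]; omega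
  rw [step1]
  have hle : ∀ l ∈ Finset.Ico ((i : ℕ) + 1) n, hext h i l ≤ (h i i : ℕ) := by
    intro l hl
    rw [Finset.mem_Ico] at hl
    have := hext_anti hsym hmono i (l := (i : ℕ)) (l' := l) (by omega)
    rwa [hext_eq] at this
  have step2 : ∀ l ∈ Finset.Ico ((i : ℕ) + 1) n,
      hext h i l = ∑ k ∈ Finset.range ((h i i : ℕ)), (if k < hext h i l then 1 else 0) := by
    intro l hl
    rw [← Finset.card_filter]
    have : (Finset.range ((h i i : ℕ))).filter (fun k => k < hext h i l) =
        Finset.range (hext h i l) := by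
      ext k
      simp only [Finset.mem_filter, Finset.mem_range]
      have := hle l hl
      omega
    rw [this, Finset.card_range]
  rw [Finset.sum_congr rfl step2, Finset.sum_comm]
  apply Finset.sum_congr rfl
  intro k _
  rw [← Finset.card_filter]
  rfl

include hsym hmono in
lemma weight :
    sumw h = ∑ i : Fin n, ∑ k ∈ Finset.range ((h i i : ℕ)), (2 * arm h i k + 1) := by
  rw [sum_split hsym]
  have upper : ∑ p ∈ Finset.univ.filter (fun p : Fin n × Fin n => p.1 < p.2), (h p.1 p.2 : ℕ) =
      ∑ i : Fin n, ∑ k ∈ Finset.range ((h i i : ℕ)), arm h i k := by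
    rw [Finset.sum_filter, Fintype.sum_prod_type]
    exact Finset.sum_congr rfl (fun i _ => row_count hsym hmono i)
  rw [upper]
  have inner : ∀ i : Fin n, ∑ k ∈ Finset.range ((h i i : ℕ)), (2 * arm h i k + 1) =
      2 * (∑ k ∈ Finset.range ((h i i : ℕ)), arm h i k) + (h i i : ℕ) := by
    intro i
    rw [Finset.sum_add_distrib, ← Finset.mul_sum, Finset.sum_const, Finset.card_range,
      smul_eq_mul, mul_one]
  rw [Finset.sum_congr rfl (fun i _ => inner i), Finset.sum_add_distrib, ← Finset.mul_sum]
  ring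

end h

noncomputable def ginv (f : Fin n → Fin (m + 1))
    (T : ((i : Fin n) × Fin ((f i : ℕ))) → Fin n) (i : Fin n) (j : ℕ) : ℕ :=
  (Finset.univ.filter
    (fun k : Fin ((f i : ℕ)) => j ≤ (i : ℕ) + (n - 1 - (T ⟨i, k⟩ : ℕ)))).card

lemma ginv_le (f : Fin n → Fin (m + 1)) (T : ((i : Fin n) × Fin ((f i : ℕ))) → Fin n)
    (i : Fin n) (j : ℕ) : ginv f T i j ≤ (f i : ℕ) := by
  have := Finset.card_filter_le (Finset.univ : Finset (Fin ((f i : ℕ))))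
    (fun k : Fin ((f i : ℕ)) => j ≤ (i : ℕ) + (n - 1 - (T ⟨i, k⟩ : ℕ)))
  simpa [ginv] using this

section fT
variable {f : Fin n → Fin (m + 1)} {T : ((i : Fin n) × Fin ((f i : ℕ))) → Fin n}
variable (hf : ∀ i j : Fin n, i ≤ j → f j ≤ f i)
variable (hrow : ∀ (i : Fin n) (j j' : Fin ((f i : ℕ))), (j : ℕ) ≤ (j' : ℕ) →
  T ⟨i, j⟩ ≤ T ⟨i, j'⟩)
variable (hcol : ∀ (i i' : Fin n) (j : Fin ((f i : ℕ))) (j' : Fin ((f i' : ℕ))),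
  i < i' → (j : ℕ) = (j' : ℕ) → T ⟨i, j⟩ < T ⟨i', j'⟩)

include hf hcol in
lemma chainAux : ∀ (d : ℕ) (i i' : Fin n), (i' : ℕ) - (i : ℕ) = d → (i : ℕ) ≤ (i' : ℕ) →
    ∀ (k : ℕ) (hk' : k < (f i' : ℕ)) (hk : k < (f i : ℕ)),
    (T ⟨i, ⟨k, hk⟩⟩ : ℕ) + ((i' : ℕ) - (i : ℕ)) ≤ (T ⟨i', ⟨k, hk'⟩⟩ : ℕ) := by
  intro d
  induction d with
  | zero =>
    intro i i' hd hle k hk' hk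
    have : i = i' := Fin.ext (by omega)
    subst this
    simp
  | succ d ih =>
    intro i i' hd hle k hk' hk
    have hi'pos : 0 < (i' : ℕ) := by omega
    set i'' : Fin n := ⟨(i' : ℕ) - 1, by omega⟩ with hi''
    have h1 : (i : ℕ) ≤ (i'' : ℕ) := by simp only [hi'']; omega
    have hle2 : i'' ≤ i' := by
      rw [Fin.le_def]; simp only [hi'']; omega
    have hk'' : k < (f i'' : ℕ) := lt_of_lt_of_le hk' (hf i'' i' hle2)
    have hih := ih i i'' (by simp only [hi'']; omega) h1 k hk'' hk
    have hstep := hcol i'' i' ⟨k, hk''⟩ ⟨k, hk'⟩ (by rw [Fin.lt_def]; simp only [hi'']; omega) rfl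
    rw [Fin.lt_def] at hstep
    simp only [hi''] at hih hstep ⊢
    omega

include hf hcol in
lemma chain {i i' : Fin n} (hii : (i : ℕ) ≤ (i' : ℕ)) {k : ℕ}
    (hk' : k < (f i' : ℕ)) (hk : k < (f i : ℕ)) :
    (T ⟨i, ⟨k, hk⟩⟩ : ℕ) + ((i' : ℕ) - (i : ℕ)) ≤ (T ⟨i', ⟨k, hk'⟩⟩ : ℕ) :=
  chainAux hf hcol _ i i' rfl hii k hk' hk

include hf hcol in
lemma Tge (hn : 0 < n) (i : Fin n) {k : ℕ} (hk : k < (f i : ℕ)) :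
    (i : ℕ) ≤ (T ⟨i, ⟨k, hk⟩⟩ : ℕ) := by
  have h0 : ((⟨0, hn⟩ : Fin n) : ℕ) = 0 := rfl
  have hk0 : k < (f ⟨0, hn⟩ : ℕ) :=
    lt_of_lt_of_le hk (hf ⟨0, hn⟩ i (by rw [Fin.le_def, h0]; omega))
  have := chain hf hcol (i := ⟨0, hn⟩) (i' := i) (by rw [h0]; omega) hk hk0
  omega

include hrow in
lemma ginv_spec (i : Fin n) (j : ℕ) (k : Fin ((f i : ℕ))) :
    (j ≤ (i : ℕ) + (n - 1 - (T ⟨i, k⟩ : ℕ))) ↔ (k : ℕ) < ginv f T i j := by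
  unfold ginv
  have h2 := finSeg (fun k => j ≤ (i : ℕ) + (n - 1 - (T ⟨i, k⟩ : ℕ)))
    (fun k k' hkk hpk' => by
      have h1 : (T ⟨i, k⟩ : ℕ) ≤ (T ⟨i, k'⟩ : ℕ) := hrow i k k' hkk
      omega) k
  rwa [Finset.filter_congr_decidable] at h2

lemma ginv_anti (i : Fin n) {j j' : ℕ} (hjj : j ≤ j') : ginv f T i j' ≤ ginv f T i j := by
  apply Finset.card_le_card
  intro k hk
  rw [Finset.mem_filter] at hk ⊢
  exact ⟨hk.1, by omega⟩

include hf hrow hcol in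
lemma ginv_mono1 {i i' : Fin n} (hii : (i : ℕ) ≤ (i' : ℕ)) {j : ℕ} (hj : (i' : ℕ) ≤ j) :
    ginv f T i' j ≤ ginv f T i j := by
  have hfi : (f i' : ℕ) ≤ (f i : ℕ) := hf i i' (by rwa [Fin.le_def])
  apply Finset.card_le_card_of_injOn (fun k => ⟨(k : ℕ), lt_of_lt_of_le k.isLt hfi⟩)
  · intro k hk
    rw [Finset.mem_coe, Finset.mem_filter] at hk
    rw [Finset.mem_coe, Finset.mem_filter]
    refine ⟨Finset.mem_univ _, ?_⟩
    dsimp only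
    have hchain := chain hf hcol hii (k := (k : ℕ)) k.isLt (lt_of_lt_of_le k.isLt hfi)
    have hlt : (T ⟨i', ⟨(k : ℕ), k.isLt⟩⟩ : ℕ) < n := (T _).isLt
    have hk2 := hk.2
    have hkeq : T ⟨i', ⟨(k : ℕ), k.isLt⟩⟩ = T ⟨i', k⟩ := rfl
    rw [hkeq] at hchain hlt
    omega
  · intro k _ k' _ hkk
    exact Fin.ext (by simpa using hkk)

include hf hrow hcol in
lemma ginv_mixed {i j : Fin n} (hij : (i : ℕ) ≤ (j : ℕ)) (x : ℕ) :
    ginv f T j x ≤ ginv f T i (j : ℕ) := by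
  have hfi : (f j : ℕ) ≤ (f i : ℕ) := hf i j (by rwa [Fin.le_def])
  apply Finset.card_le_card_of_injOn (fun k => ⟨(k : ℕ), lt_of_lt_of_le k.isLt hfi⟩)
  · intro k _
    rw [Finset.mem_coe, Finset.mem_filter]
    refine ⟨Finset.mem_univ _, ?_⟩
    dsimp only
    have hchain := chain hf hcol hij (k := (k : ℕ)) k.isLt (lt_of_lt_of_le k.isLt hfi)
    have hlt : (T ⟨j, ⟨(k : ℕ), k.isLt⟩⟩ : ℕ) < n := (T _).isLt
    omega
  · intro k _ k' _ hkk
    exact Fin.ext (by simpa using hkk)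

end fT

noncomputable def bwd (f : Fin n → Fin (m + 1))
    (T : ((i : Fin n) × Fin ((f i : ℕ))) → Fin n) : Fin n → Fin n → Fin (m + 1) := fun i j =>
  if (i : ℕ) ≤ (j : ℕ) then
    ⟨ginv f T i (j : ℕ), by
      have h1 := ginv_le f T i (j : ℕ)
      have h2 : (f i : ℕ) ≤ m := Fin.is_le _
      omega⟩
  else
    ⟨ginv f T j (i : ℕ), by
      have h1 := ginv_le f T j (i : ℕ)
      have h2 : (f j : ℕ) ≤ m := Fin.is_le _
      omega⟩

section fT2
variable {f : Fin n → Fin (m + 1)} {T : ((i : Fin n) × Fin ((f i : ℕ))) → Fin n}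
variable (hf : ∀ i j : Fin n, i ≤ j → f j ≤ f i)
variable (hrow : ∀ (i : Fin n) (j j' : Fin ((f i : ℕ))), (j : ℕ) ≤ (j' : ℕ) →
  T ⟨i, j⟩ ≤ T ⟨i, j'⟩)
variable (hcol : ∀ (i i' : Fin n) (j : Fin ((f i : ℕ))) (j' : Fin ((f i' : ℕ))),
  i < i' → (j : ℕ) = (j' : ℕ) → T ⟨i, j⟩ < T ⟨i', j'⟩)

lemma bwd_sym (i j : Fin n) : bwd f T i j = bwd f T j i := by
  unfold bwd
  rcases lt_trichotomy (i : ℕ) (j : ℕ) with hlt | heq | hgt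
  · rw [if_pos (le_of_lt hlt), if_neg (by omega)]
  · have : i = j := Fin.ext heq
    subst this
    rfl
  · rw [if_neg (by omega), if_pos (le_of_lt hgt)]

include hf hrow hcol in
lemma bwd_mono (i i' j : Fin n) (hii : i ≤ i') : bwd f T i' j ≤ bwd f T i j := by
  have hii' : (i : ℕ) ≤ (i' : ℕ) := hii
  unfold bwd
  by_cases hA : (i' : ℕ) ≤ (j : ℕ)
  · rw [if_pos hA, if_pos (by omega)]
    exact ginv_mono1 hf hrow hcol hii' hA
  · rw [if_neg hA]
    by_cases hB : (i : ℕ) ≤ (j : ℕ)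
    · rw [if_pos hB]
      exact ginv_mixed hf hrow hcol hB (i' : ℕ)
    · rw [if_neg hB]
      exact ginv_anti j (by omega)

lemma bwd_diag (i : Fin n) : bwd f T i i = f i := by
  unfold bwd
  rw [if_pos (le_refl _)]
  apply Fin.ext
  show ginv f T i (i : ℕ) = (f i : ℕ)
  unfold ginv
  rw [Finset.filter_true_of_mem (fun k _ => by omega), Finset.card_univ, Fintype.card_fin]

include hf hrow hcol in
lemma arm_bwd (hn : 0 < n) (i : Fin n) (k : ℕ) (hk : k < (f i : ℕ)) :
    arm (bwd f T) i k = n - 1 - (T ⟨i, ⟨k, hk⟩⟩ : ℕ) := by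
  have hTlt : (T ⟨i, ⟨k, hk⟩⟩ : ℕ) < n := (T _).isLt
  have hTge : (i : ℕ) ≤ (T ⟨i, ⟨k, hk⟩⟩ : ℕ) := Tge hf hcol hn i hk
  set X : ℕ := (i : ℕ) + (n - 1 - (T ⟨i, ⟨k, hk⟩⟩ : ℕ)) with hX
  have key : ∀ l ∈ Finset.Ico ((i : ℕ) + 1) n, (k < hext (bwd f T) i l ↔ l ≤ X) := by
    intro l hl
    rw [Finset.mem_Ico] at hl
    have hln : l < n := hl.2
    have hbv : hext (bwd f T) i l = ginv f T i l := by
      unfold hext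
      rw [dif_pos hln]
      show ((bwd f T i ⟨l, hln⟩ : Fin (m + 1)) : ℕ) = _
      unfold bwd
      rw [if_pos (show (i : ℕ) ≤ l by omega)]
    rw [hbv]
    have := ginv_spec hrow i l ⟨k, hk⟩
    rw [← this]
  unfold arm
  rw [Finset.filter_congr key]
  have : (Finset.Ico ((i : ℕ) + 1) n).filter (fun l => l ≤ X) =
      Finset.Ico ((i : ℕ) + 1) (X + 1) := by
    ext l
    simp only [Finset.mem_filter, Finset.mem_Ico]
    omega
  rw [this, Nat.card_Ico]
  omega

end fT2

noncomputable def fwdT (hn : 0 < n) (h : Fin n → Fin n → Fin (m + 1)) :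
    ((i : Fin n) × Fin ((h i i : ℕ))) → Fin n :=
  fun c => ⟨n - 1 - arm h c.1 (c.2 : ℕ), by omega⟩

section h2
variable {h : Fin n → Fin n → Fin (m + 1)}
variable (hsym : ∀ i j, h i j = h j i) (hmono : ∀ i i' j : Fin n, i ≤ i' → h i' j ≤ h i j)

include hsym hmono in
lemma ginv_fwd (hn : 0 < n) (i j : Fin n) (hij : (i : ℕ) ≤ (j : ℕ)) :
    ginv (fun i => h i i) (fwdT hn h) i ((j : ℕ)) = (h i j : ℕ) := by
  have harmle : ∀ k : Fin ((h i i : ℕ)), arm h i (k : ℕ) ≤ n - 1 := by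
    intro k
    have := arm_le (h := h) i (k : ℕ)
    omega
  have key : ∀ k : Fin ((h i i : ℕ)),
      ((j : ℕ) ≤ (i : ℕ) + (n - 1 - ((fwdT hn h ⟨i, k⟩ : Fin n) : ℕ))) ↔
        ((k : ℕ) < (h i j : ℕ)) := by
    intro k
    have hv : ((fwdT hn h ⟨i, k⟩ : Fin n) : ℕ) = n - 1 - arm h i (k : ℕ) := rfl
    rw [hv]
    have harm := harmle k
    rcases eq_or_lt_of_le hij with heq | hlt
    · have : i = j := Fin.ext heq
      subst this
      simp only [iff_true_intro k.isLt, iff_true]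
      omega
    · rw [arm_spec hsym hmono hlt (k : ℕ)]
      omega
  unfold ginv
  rw [Finset.filter_congr (fun k _ => key k)]
  have hle : (h i j : ℕ) ≤ (h i i : ℕ) := hmono2 hsym hmono (by rwa [Fin.le_def])
  exact finCardLt _ _ hle

include hsym hmono in
lemma bwd_fwd (hn : 0 < n) : bwd (fun i => h i i) (fwdT hn h) = h := by
  funext i j
  unfold bwd
  by_cases hij : (i : ℕ) ≤ (j : ℕ)
  · rw [if_pos hij]
    exact Fin.ext (ginv_fwd hsym hmono hn i j hij)
  · rw [if_neg hij]
    apply Fin.ext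
    show ginv (fun i => h i i) (fwdT hn h) j ((i : ℕ)) = ((h i j : Fin (m + 1)) : ℕ)
    rw [ginv_fwd hsym hmono hn j i (by omega), hsym i j]

include hsym hmono in
lemma fwd_f_anti (i j : Fin n) (hij : i ≤ j) : h j j ≤ h i i :=
  le_trans (hmono i j j hij) (hmono2 hsym hmono hij)

lemma fwdT_row (hn : 0 < n) (i : Fin n) (j j' : Fin ((h i i : ℕ))) (hjj : (j : ℕ) ≤ (j' : ℕ)) :
    fwdT hn h ⟨i, j⟩ ≤ fwdT hn h ⟨i, j'⟩ := by
  rw [Fin.le_def]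
  show n - 1 - arm h i (j : ℕ) ≤ n - 1 - arm h i (j' : ℕ)
  have := arm_anti (h := h) i hjj
  omega

include hmono in
lemma fwdT_col (hn : 0 < n) (i i' : Fin n) (j : Fin ((h i i : ℕ))) (j' : Fin ((h i' i' : ℕ)))
    (hii : i < i') (hjj : (j : ℕ) = (j' : ℕ)) : fwdT hn h ⟨i, j⟩ < fwdT hn h ⟨i', j'⟩ := by
  rw [Fin.lt_def]
  show n - 1 - arm h i (j : ℕ) < n - 1 - arm h i' (j' : ℕ)
  have hstrict := arm_strict (h := h) hmono (i := i) (i' := i') hii j'.isLt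
  have h1 := arm_le (h := h) i (j : ℕ)
  have h2 := arm_le (h := h) i' (j' : ℕ)
  rw [hjj]
  have hi : (i : ℕ) < n := i.isLt
  omega

end h2

noncomputable def hN (h : Fin n → Fin n → Fin (m + 1)) (i j : ℕ) : ℕ :=
  if hij : i - 1 < n ∧ j - 1 < n then (h ⟨i - 1, hij.1⟩ ⟨j - 1, hij.2⟩ : ℕ) else 0

noncomputable def toP (h : Fin n → Fin n → Fin (m + 1)) : Finset (ℕ × ℕ × ℕ) :=
  (Finset.Icc 1 n ×ˢ Finset.Icc 1 n ×ˢ Finset.Icc 1 m).filter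
    (fun p => p.2.2 ≤ hN h p.1 p.2.1)

noncomputable def cnt (μ : ℕ) (P : Finset (ℕ × ℕ × ℕ)) (i j : ℕ) : ℕ :=
  ((Finset.Icc 1 μ).filter (fun k => (i, j, k) ∈ P)).card

lemma cnt_le (μ : ℕ) (P : Finset (ℕ × ℕ × ℕ)) (i j : ℕ) : cnt μ P i j ≤ μ := by
  have h1 : cnt μ P i j ≤ (Finset.Icc 1 μ).card := Finset.card_filter_le _ _
  rwa [Nat.card_Icc, Nat.add_sub_cancel] at h1

noncomputable def toh (P : Finset (ℕ × ℕ × ℕ)) : Fin n → Fin n → Fin (m + 1) :=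
  fun i j => ⟨cnt m P ((i : ℕ) + 1) ((j : ℕ) + 1), by
    have := cnt_le m P ((i : ℕ) + 1) ((j : ℕ) + 1); omega⟩

lemma hN_eq {h : Fin n → Fin n → Fin (m + 1)} (i j : Fin n) :
    hN h ((i : ℕ) + 1) ((j : ℕ) + 1) = (h i j : ℕ) := by
  unfold hN
  rw [dif_pos (by constructor <;> · simp only [Nat.add_sub_cancel]; omega)]
  congr 1 <;> exact Fin.ext (by simp)

lemma hN_le (h : Fin n → Fin n → Fin (m + 1)) (i j : ℕ) : hN h i j ≤ m := by
  unfold hN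
  split
  · exact Fin.is_le _
  · omega

section hA
variable {h : Fin n → Fin n → Fin (m + 1)}
variable (hsym : ∀ i j, h i j = h j i) (hmono : ∀ i i' j : Fin n, i ≤ i' → h i' j ≤ h i j)

include hsym in
lemma hN_symm (i j : ℕ) : hN h i j = hN h j i := by
  unfold hN
  by_cases hij : i - 1 < n ∧ j - 1 < n
  · rw [dif_pos hij, dif_pos ⟨hij.2, hij.1⟩, hsym]
  · rw [dif_neg hij, dif_neg (fun hc => hij ⟨hc.2, hc.1⟩)]

include hsym hmono in
lemma hN_mono {i j a b : ℕ} (hi : 1 ≤ i) (hia : i ≤ a) (han : a ≤ n) (hj : 1 ≤ j)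
    (hjb : j ≤ b) (hbn : b ≤ n) : hN h a b ≤ hN h i j := by
  have h1 : a - 1 < n := by omega
  have h2 : b - 1 < n := by omega
  have h3 : i - 1 < n := by omega
  have h4 : j - 1 < n := by omega
  unfold hN
  rw [dif_pos ⟨h1, h2⟩, dif_pos ⟨h3, h4⟩]
  have s1 : h ⟨a - 1, h1⟩ ⟨b - 1, h2⟩ ≤ h ⟨i - 1, h3⟩ ⟨b - 1, h2⟩ :=
    hmono ⟨i - 1, h3⟩ ⟨a - 1, h1⟩ _ (by rw [Fin.le_def]; simp; omega)
  have s2 : h ⟨i - 1, h3⟩ ⟨b - 1, h2⟩ ≤ h ⟨i - 1, h3⟩ ⟨j - 1, h4⟩ :=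
    hmono2 hsym hmono (by rw [Fin.le_def]; simp; omega)
  have s1' : (h ⟨a - 1, h1⟩ ⟨b - 1, h2⟩ : ℕ) ≤ (h ⟨i - 1, h3⟩ ⟨b - 1, h2⟩ : ℕ) := s1
  have s2' : (h ⟨i - 1, h3⟩ ⟨b - 1, h2⟩ : ℕ) ≤ (h ⟨i - 1, h3⟩ ⟨j - 1, h4⟩ : ℕ) := s2
  omega

end hA

lemma mem_toP {h : Fin n → Fin n → Fin (m + 1)} {p : ℕ × ℕ × ℕ} :
    p ∈ toP h ↔ (1 ≤ p.1 ∧ p.1 ≤ n) ∧ (1 ≤ p.2.1 ∧ p.2.1 ≤ n) ∧ (1 ≤ p.2.2 ∧ p.2.2 ≤ m) ∧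
      p.2.2 ≤ hN h p.1 p.2.1 := by
  unfold toP
  rw [Finset.mem_filter, Finset.mem_product, Finset.mem_product, Finset.mem_Icc,
    Finset.mem_Icc, Finset.mem_Icc]
  tauto

lemma iccCnt {c : ℕ} (hc : c ≤ m) :
    ((Finset.Icc 1 m).filter (fun k => k ≤ c)).card = c := by
  have : (Finset.Icc 1 m).filter (fun k => k ≤ c) = Finset.Icc 1 c := by
    ext k
    simp only [Finset.mem_filter, Finset.mem_Icc]
    omega
  rw [this, Nat.card_Icc, Nat.add_sub_cancel]

lemma icc_reindex (F : ℕ → ℕ) : ∑ a ∈ Finset.Icc 1 n, F a = ∑ i : Fin n, F ((i : ℕ) + 1) := by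
  rw [Fin.sum_univ_eq_sum_range (fun i => F (i + 1)) n]
  apply Finset.sum_nbij' (i := fun a => a - 1) (j := fun a => a + 1)
  · intro a ha; rw [Finset.mem_Icc] at ha; rw [Finset.mem_range]; omega
  · intro a ha; rw [Finset.mem_range] at ha; rw [Finset.mem_Icc]; omega
  · intro a ha; rw [Finset.mem_Icc] at ha; omega
  · intro a ha; rw [Finset.mem_range] at ha; omega
  · intro a ha; rw [Finset.mem_Icc] at ha; congr 1; omega

lemma card_toP (h : Fin n → Fin n → Fin (m + 1)) : (toP h).card = sumw h := by
  unfold toP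
  rw [Finset.card_filter, Finset.sum_product, Finset.sum_congr rfl
    (fun a _ => Finset.sum_product (f := fun p : ℕ × ℕ => if p.2 ≤ hN h a p.1 then 1 else 0)
      (Finset.Icc 1 n) (Finset.Icc 1 m))]
  have inner : ∀ a b : ℕ, ∑ k ∈ Finset.Icc 1 m, (if k ≤ hN h a b then 1 else 0) = hN h a b := by
    intro a b
    rw [← Finset.card_filter]
    exact iccCnt (hN_le h a b)
  rw [Finset.sum_congr rfl (fun a _ => Finset.sum_congr rfl (fun b _ => inner a b))]
  rw [icc_reindex (fun a => ∑ b ∈ Finset.Icc 1 n, hN h a b)]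
  unfold sumw
  apply Finset.sum_congr rfl
  intro i _
  rw [icc_reindex (fun b => hN h ((i : ℕ) + 1) b)]
  apply Finset.sum_congr rfl
  intro j _
  exact hN_eq i j

lemma toh_toP (h : Fin n → Fin n → Fin (m + 1)) : toh (toP h) = h := by
  funext i j
  apply Fin.ext
  show cnt m (toP h) ((i : ℕ) + 1) ((j : ℕ) + 1) = (h i j : ℕ)
  unfold cnt
  have : ∀ k ∈ Finset.Icc 1 m, (((i : ℕ) + 1, (j : ℕ) + 1, k) ∈ toP h ↔ k ≤ (h i j : ℕ)) := by
    intro k hk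
    rw [Finset.mem_Icc] at hk
    rw [mem_toP, hN_eq]
    dsimp only
    have hi : (i : ℕ) < n := i.isLt
    have hj : (j : ℕ) < n := j.isLt
    constructor
    · intro hc; exact hc.2.2.2
    · intro hc; exact ⟨⟨by omega, by omega⟩, ⟨by omega, by omega⟩, ⟨hk.1, hk.2⟩, hc⟩
  rw [Finset.filter_congr this]
  exact iccCnt (Fin.is_le _)

lemma mem_iff_cnt {P : Finset (ℕ × ℕ × ℕ)}
    (hsub : P ⊆ Finset.Icc 1 n ×ˢ Finset.Icc 1 n ×ˢ Finset.Icc 1 m)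
    (hideal : ∀ p ∈ P, ∀ i j k : ℕ, 1 ≤ i → i ≤ p.1 → 1 ≤ j → j ≤ p.2.1 →
      1 ≤ k → k ≤ p.2.2 → (i, j, k) ∈ P)
    (a b k : ℕ) (hk : 1 ≤ k) : (a, b, k) ∈ P ↔ k ≤ cnt m P a b := by
  have hbd : ∀ x : ℕ, (a, b, x) ∈ P → 1 ≤ a ∧ a ≤ n ∧ 1 ≤ b ∧ b ≤ n ∧ 1 ≤ x ∧ x ≤ m := by
    intro x hx
    have := hsub hx
    rw [Finset.mem_product, Finset.mem_product, Finset.mem_Icc, Finset.mem_Icc,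
      Finset.mem_Icc] at this
    exact ⟨this.1.1, this.1.2, this.2.1.1, this.2.1.2, this.2.2.1, this.2.2.2⟩
  have hc := dcCard ((Finset.Icc 1 m).filter (fun k => (a, b, k) ∈ P)) 1
    (fun x hx => by rw [Finset.mem_filter, Finset.mem_Icc] at hx; omega)
    (fun x hx y hy hyx => by
      rw [Finset.mem_filter, Finset.mem_Icc] at hx ⊢
      obtain ⟨⟨hx1, hx2⟩, hxP⟩ := hx
      have hb := hbd x hxP
      refine ⟨⟨hy, by omega⟩, ?_⟩
      exact hideal (a, b, x) hxP a b y (by omega) (le_refl _) (by omega) (le_refl _) hy hyx)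
    (x := k) hk
  rw [Finset.mem_filter, Finset.mem_Icc] at hc
  have hcnt : cnt m P a b ≤ m := cnt_le m P a b
  unfold cnt at *
  constructor
  · intro hP
    have hb := hbd k hP
    have := hc.mp ⟨⟨hk, by omega⟩, hP⟩
    omega
  · intro hle
    exact (hc.mpr (by omega)).2

lemma toP_toh {P : Finset (ℕ × ℕ × ℕ)}
    (hsub : P ⊆ Finset.Icc 1 n ×ˢ Finset.Icc 1 n ×ˢ Finset.Icc 1 m)
    (hideal : ∀ p ∈ P, ∀ i j k : ℕ, 1 ≤ i → i ≤ p.1 → 1 ≤ j → j ≤ p.2.1 →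
      1 ≤ k → k ≤ p.2.2 → (i, j, k) ∈ P) (hn : 0 < n) :
    toP (toh P : Fin n → Fin n → Fin (m + 1)) = P := by
  ext p
  obtain ⟨a, b, c⟩ := p
  rw [mem_toP]
  dsimp only
  have hbd : (a, b, c) ∈ P → 1 ≤ a ∧ a ≤ n ∧ 1 ≤ b ∧ b ≤ n ∧ 1 ≤ c ∧ c ≤ m := by
    intro hx
    have := hsub hx
    rw [Finset.mem_product, Finset.mem_product, Finset.mem_Icc, Finset.mem_Icc,
      Finset.mem_Icc] at this
    exact ⟨this.1.1, this.1.2, this.2.1.1, this.2.1.2, this.2.2.1, this.2.2.2⟩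
  constructor
  · rintro ⟨⟨ha1, ha2⟩, ⟨hb1, hb2⟩, ⟨hc1, hc2⟩, hcc⟩
    have h1 : a - 1 < n := by omega
    have h2 : b - 1 < n := by omega
    rw [show hN (toh P : Fin n → Fin n → Fin (m + 1)) a b = cnt m P a b by
      unfold hN
      rw [dif_pos ⟨h1, h2⟩]
      show cnt m P ((a - 1) + 1) ((b - 1) + 1) = cnt m P a b
      congr 1 <;> omega] at hcc
    exact (mem_iff_cnt hsub hideal a b c hc1).mpr hcc
  · intro hP
    have hb := hbd hP
    have h1 : a - 1 < n := by omega
    have h2 : b - 1 < n := by omega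
    refine ⟨⟨by omega, by omega⟩, ⟨by omega, by omega⟩, ⟨by omega, by omega⟩, ?_⟩
    rw [show hN (toh P : Fin n → Fin n → Fin (m + 1)) a b = cnt m P a b by
      unfold hN
      rw [dif_pos ⟨h1, h2⟩]
      show cnt m P ((a - 1) + 1) ((b - 1) + 1) = cnt m P a b
      congr 1 <;> omega]
    exact (mem_iff_cnt hsub hideal a b c (by omega)).mp hP

lemma sigma_eq {f f' : Fin n → Fin (m + 1)}
    {T' : ((i : Fin n) × Fin ((f' i : ℕ))) → Fin n}
    {T : ((i : Fin n) × Fin ((f i : ℕ))) → Fin n}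
    (hff : f' = f)
    (hTT : ∀ (i : Fin n) (k : ℕ) (hk' : k < (f' i : ℕ)) (hk : k < (f i : ℕ)),
      T' ⟨i, ⟨k, hk'⟩⟩ = T ⟨i, ⟨k, hk⟩⟩) :
    (⟨f', T'⟩ : Σ f : Fin n → Fin (m + 1), ((i : Fin n) × Fin ((f i : ℕ))) → Fin n) =
      ⟨f, T⟩ := by
  subst hff
  exact congrArg (Sigma.mk f') (funext fun c => by
    obtain ⟨i, k⟩ := c
    exact hTT i (k : ℕ) k.isLt k.isLt)

lemma stepA {R : Type*} [CommRing R] (hn : 0 < n) (q : R) :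
    (∑ P ∈ ((Finset.Icc 1 n ×ˢ Finset.Icc 1 n ×ˢ Finset.Icc 1 m).powerset.filter
        (fun P : Finset (ℕ × ℕ × ℕ) =>
          (∀ p ∈ P, ∀ i j k : ℕ, 1 ≤ i → i ≤ p.1 → 1 ≤ j → j ≤ p.2.1 →
            1 ≤ k → k ≤ p.2.2 → (i, j, k) ∈ P) ∧
          (∀ i j k : ℕ, (i, j, k) ∈ P ↔ (j, i, k) ∈ P))),
      q ^ P.card) =
    ∑ h ∈ Finset.univ.filter (fun h : Fin n → Fin n → Fin (m + 1) =>
        (∀ i j, h i j = h j i) ∧ (∀ i i' j : Fin n, i ≤ i' → h i' j ≤ h i j)),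
      q ^ sumw h := by
  apply Finset.sum_nbij' (i := toh) (j := toP)
  · intro P hP
    rw [Finset.mem_filter, Finset.mem_powerset] at hP
    obtain ⟨hsub, hideal, hsymP⟩ := hP
    rw [Finset.mem_filter]
    refine ⟨Finset.mem_univ _, ?_, ?_⟩
    · intro i j
      apply Fin.ext
      show cnt m P ((i : ℕ) + 1) ((j : ℕ) + 1) = cnt m P ((j : ℕ) + 1) ((i : ℕ) + 1)
      unfold cnt
      congr 1
      apply Finset.filter_congr
      intro k _
      exact hsymP ((i : ℕ) + 1) ((j : ℕ) + 1) k
    · intro i i' j hii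
      rw [Fin.le_def]
      show cnt m P ((i' : ℕ) + 1) ((j : ℕ) + 1) ≤ cnt m P ((i : ℕ) + 1) ((j : ℕ) + 1)
      apply Finset.card_le_card
      intro k hk
      rw [Finset.mem_filter] at hk ⊢
      refine ⟨hk.1, ?_⟩
      have hii' : (i : ℕ) ≤ (i' : ℕ) := hii
      exact hideal _ hk.2 ((i : ℕ) + 1) ((j : ℕ) + 1) k (by omega) (by simp; omega)
        (by omega) (le_refl _) (by rw [Finset.mem_Icc] at hk; omega) (le_refl _)
  · intro h hh
    rw [Finset.mem_filter] at hh
    obtain ⟨-, hsym, hmono⟩ := hh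
    rw [Finset.mem_filter, Finset.mem_powerset]
    refine ⟨Finset.filter_subset _ _, ?_, ?_⟩
    · intro p hp i j k hi hip hj hjp hk hkp
      rw [mem_toP] at hp ⊢
      dsimp only
      obtain ⟨⟨h1, h2⟩, ⟨h3, h4⟩, ⟨h5, h6⟩, h7⟩ := hp
      refine ⟨⟨hi, by omega⟩, ⟨hj, by omega⟩, ⟨hk, by omega⟩, ?_⟩
      have := hN_mono hsym hmono hi hip h2 hj hjp h4
      omega
    · intro i j k
      rw [mem_toP, mem_toP]
      dsimp only
      rw [hN_symm hsym i j]
      tauto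
  · intro P hP
    rw [Finset.mem_filter, Finset.mem_powerset] at hP
    exact toP_toh hP.1 hP.2.1 hn
  · intro h hh
    exact toh_toP h
  · intro P hP
    rw [Finset.mem_filter, Finset.mem_powerset] at hP
    congr 1
    conv_lhs => rw [← toP_toh hP.1 hP.2.1 hn]
    exact card_toP _

lemma hprod {R : Type*} [CommRing R] (q : R) (f : Fin n → Fin (m + 1))
    (T : ((i : Fin n) × Fin ((f i : ℕ))) → Fin n) :
    (∏ a : Fin n, (q ^ (2 * (n - 1 - (a : ℕ)) + 1)) ^
        (Finset.univ.filter (fun c => T c = a)).card) =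
      q ^ (∑ c : (i : Fin n) × Fin ((f i : ℕ)), (2 * (n - 1 - ((T c : Fin n) : ℕ)) + 1)) := by
  calc (∏ a : Fin n, (q ^ (2 * (n - 1 - (a : ℕ)) + 1)) ^
        (Finset.univ.filter (fun c => T c = a)).card)
      = ∏ a : Fin n, ∏ c ∈ Finset.univ.filter (fun c => T c = a),
          q ^ (2 * (n - 1 - ((T c : Fin n) : ℕ)) + 1) := by
        refine Finset.prod_congr rfl (fun a _ => ?_)
        rw [Finset.prod_congr rfl (fun c hc => by
          rw [(Finset.mem_filter.mp hc).2] :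
            ∀ c ∈ Finset.univ.filter (fun c => T c = a),
              q ^ (2 * (n - 1 - ((T c : Fin n) : ℕ)) + 1) =
                q ^ (2 * (n - 1 - (a : ℕ)) + 1)), Finset.prod_const]
    _ = ∏ c : (i : Fin n) × Fin ((f i : ℕ)), q ^ (2 * (n - 1 - ((T c : Fin n) : ℕ)) + 1) :=
        Finset.prod_fiberwise Finset.univ T (fun c => q ^ (2 * (n - 1 - ((T c : Fin n) : ℕ)) + 1))
    _ = q ^ (∑ c : (i : Fin n) × Fin ((f i : ℕ)), (2 * (n - 1 - ((T c : Fin n) : ℕ)) + 1)) :=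
        Finset.prod_pow_eq_pow_sum _ _ _

lemma stepB {R : Type*} [CommRing R] (hn : 0 < n) (q : R) :
    (∑ h ∈ Finset.univ.filter (fun h : Fin n → Fin n → Fin (m + 1) =>
        (∀ i j, h i j = h j i) ∧ (∀ i i' j : Fin n, i ≤ i' → h i' j ≤ h i j)),
      q ^ sumw h) =
    ∑ f ∈ Finset.univ.filter
        (fun f : Fin n → Fin (m + 1) => ∀ i j : Fin n, i ≤ j → f j ≤ f i),
      schur (fun i => (f i : ℕ)) (fun i => q ^ (2 * (n - 1 - (i : ℕ)) + 1)) := by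
  have hschur : ∀ f : Fin n → Fin (m + 1),
      schur (fun i => (f i : ℕ)) (fun i => q ^ (2 * (n - 1 - (i : ℕ)) + 1)) =
      ∑ T ∈ Finset.univ.filter
        (fun T : ((i : Fin n) × Fin ((f i : ℕ))) → Fin n =>
          (∀ (i : Fin n) (j j' : Fin ((f i : ℕ))), (j : ℕ) ≤ (j' : ℕ) → T ⟨i, j⟩ ≤ T ⟨i, j'⟩) ∧
          (∀ (i i' : Fin n) (j : Fin ((f i : ℕ))) (j' : Fin ((f i' : ℕ))),
            i < i' → (j : ℕ) = (j' : ℕ) → T ⟨i, j⟩ < T ⟨i', j'⟩)),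
        q ^ (∑ c : (i : Fin n) × Fin ((f i : ℕ)), (2 * (n - 1 - ((T c : Fin n) : ℕ)) + 1)) := by
    intro f
    unfold schur
    exact Finset.sum_congr rfl (fun T _ => hprod q f T)
  rw [Finset.sum_congr rfl (fun f _ => hschur f), Finset.sum_sigma']
  symm
  apply Finset.sum_nbij' (i := fun x => bwd x.1 x.2)
    (j := fun h => (⟨fun i => h i i, fwdT hn h⟩ :
      Σ f : Fin n → Fin (m + 1), ((i : Fin n) × Fin ((f i : ℕ))) → Fin n))
  · intro x hx
    rw [Finset.mem_sigma, Finset.mem_filter, Finset.mem_filter] at hx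
    obtain ⟨⟨-, hf⟩, -, hrow, hcol⟩ := hx
    rw [Finset.mem_filter]
    exact ⟨Finset.mem_univ _, bwd_sym, bwd_mono hf hrow hcol⟩
  · intro h hh
    rw [Finset.mem_filter] at hh
    obtain ⟨-, hsym, hmono⟩ := hh
    rw [Finset.mem_sigma, Finset.mem_filter, Finset.mem_filter]
    dsimp only
    exact ⟨⟨Finset.mem_univ _, fwd_f_anti hsym hmono⟩, Finset.mem_univ _,
      fwdT_row hn, fwdT_col hmono hn⟩
  · intro x hx
    obtain ⟨f, T⟩ := x
    rw [Finset.mem_sigma, Finset.mem_filter, Finset.mem_filter] at hx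
    dsimp only at hx
    obtain ⟨⟨-, hf⟩, -, hrow, hcol⟩ := hx
    apply sigma_eq (funext fun i => bwd_diag i)
    intro i k hk' hk
    apply Fin.ext
    show n - 1 - arm (bwd f T) i k = ((T ⟨i, ⟨k, hk⟩⟩ : Fin n) : ℕ)
    rw [arm_bwd hf hrow hcol hn i k hk]
    have := (T ⟨i, ⟨k, hk⟩⟩).isLt
    omega
  · intro h hh
    rw [Finset.mem_filter] at hh
    exact bwd_fwd hh.2.1 hh.2.2 hn
  · intro x hx
    obtain ⟨f, T⟩ := x
    rw [Finset.mem_sigma, Finset.mem_filter, Finset.mem_filter] at hx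
    dsimp only at hx
    obtain ⟨⟨-, hf⟩, -, hrow, hcol⟩ := hx
    dsimp only
    congr 1
    have key : ∀ i : Fin n, ∀ k : Fin ((f i : ℕ)),
        2 * (n - 1 - ((T ⟨i, k⟩ : Fin n) : ℕ)) + 1 = 2 * arm (bwd f T) i (k : ℕ) + 1 := by
      intro i k
      rw [arm_bwd hf hrow hcol hn i (k : ℕ) k.isLt]
    calc ∑ c : (i : Fin n) × Fin ((f i : ℕ)), (2 * (n - 1 - ((T c : Fin n) : ℕ)) + 1)
        = ∑ i : Fin n, ∑ k : Fin ((f i : ℕ)), (2 * (n - 1 - ((T ⟨i, k⟩ : Fin n) : ℕ)) + 1) := by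
          rw [← Finset.univ_sigma_univ, Finset.sum_sigma]
      _ = ∑ i : Fin n, ∑ k : Fin ((f i : ℕ)), (2 * arm (bwd f T) i (k : ℕ) + 1) := by
          exact Finset.sum_congr rfl (fun i _ =>
            Finset.sum_congr rfl (fun k _ => key i k))
      _ = ∑ i : Fin n, ∑ k ∈ Finset.range ((f i : ℕ)),
            (2 * arm (bwd f T) i k + 1) := by
          exact Finset.sum_congr rfl (fun i _ =>
            Fin.sum_univ_eq_sum_range (fun k => 2 * arm (bwd f T) i k + 1) _)
      _ = ∑ i : Fin n, ∑ k ∈ Finset.range (((bwd f T) i i : ℕ)),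
            (2 * arm (bwd f T) i k + 1) := by
          refine Finset.sum_congr rfl (fun i _ => ?_)
          rw [bwd_diag i]
      _ = sumw (bwd f T) := (weight bwd_sym (bwd_mono hf hrow hcol)).symm

end Stmt15Aux

open scoped Classical in
/-- The generating function for symmetric plane partitions in the box `[1,n]×[1,n]×[1,m]`
equals `Σ_{λ⊆(mⁿ)} s_λ(q^{2n-1}, q^{2n-3}, ..., q³, q)`, the sum of Schur polynomials over
partitions fitting in an `n×m` rectangle (encoded as antitone functions `Fin n → Fin (m+1)`)
evaluated at the odd powers `xᵢ = q^{2(n-i)+1}` (0-indexed: `q^{2(n-1-i)+1}`). A polynomial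
identity in `q`, stated for an arbitrary element `q` of a commutative ring. -/
theorem stmt15 {R : Type*} [CommRing R] {m n : ℕ} (hm : 0 < m) (hn : 0 < n) (q : R) :
    (∑ P ∈ ((Finset.Icc 1 n ×ˢ Finset.Icc 1 n ×ˢ Finset.Icc 1 m).powerset.filter
        (fun P : Finset (ℕ × ℕ × ℕ) =>
          (∀ p ∈ P, ∀ i j k : ℕ, 1 ≤ i → i ≤ p.1 → 1 ≤ j → j ≤ p.2.1 →
            1 ≤ k → k ≤ p.2.2 → (i, j, k) ∈ P) ∧
          (∀ i j k : ℕ, (i, j, k) ∈ P ↔ (j, i, k) ∈ P))),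
      q ^ P.card) =
    ∑ f ∈ Finset.univ.filter
        (fun f : Fin n → Fin (m + 1) => ∀ i j : Fin n, i ≤ j → f j ≤ f i),
      schur (fun i => (f i : ℕ)) (fun i => q ^ (2 * (n - 1 - (i : ℕ)) + 1)) := by
  exact (Stmt15Aux.stepA hn q).trans (Stmt15Aux.stepB hn q)
end

section
/- For the B_n denominator D_n(x_1,...,x_n) = det(x_j^{i-1} - x_j^{2n-i}), viewed as a polynomial in x_1 over the field ℚ(x_2,...,x_n): D_n has degree 2n-1 in x_1, vanishes at x_1 = 1, at x_1 = x_i and x_1 = x_i^{-1} for 2 ≤ i ≤ n, and its leading coefficient in x_1 is -x_2⋯x_n · D_{n-1}(x_2,...,x_n). -/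
/-- `D_{n+1}(X, x₁, ..., xₙ)`: the `B` Weyl denominator determinant
`det(v_j^{i-1} - v_j^{2(n+1)-i})` (0-indexed exponents `i` and `2(n+1)-1-i`) in the
`n+1` variables `v = (X, x₁, ..., xₙ)`, viewed as a polynomial in its first variable
`X` over the field `K` containing the remaining variables. -/
noncomputable def Dpoly {K : Type*} [Field K] {n : ℕ} (x : Fin n → K) : Polynomial K :=
  Matrix.det (fun i j : Fin (n + 1) =>
    (Fin.cons Polynomial.X (fun s => Polynomial.C (x s)) : Fin (n + 1) → Polynomial K) j
        ^ (i : ℕ) -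
      (Fin.cons Polynomial.X (fun s => Polynomial.C (x s)) : Fin (n + 1) → Polynomial K) j
        ^ (2 * (n + 1) - 1 - (i : ℕ)))

/-- `Dₙ(x₁,...,xₙ)` with all variables in the field. -/
def Dval {K : Type*} [Field K] {n : ℕ} (x : Fin n → K) : K :=
  Matrix.det (fun i j : Fin n => x j ^ (i : ℕ) - x j ^ (2 * n - 1 - (i : ℕ)))

open Polynomial Matrix

lemma eval_Dpoly {K : Type*} [Field K] {n : ℕ} (x : Fin n → K) (a : K) :
    (Dpoly x).eval a = Matrix.det (fun i j : Fin (n+1) =>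
      (Fin.cons a x : Fin (n+1) → K) j ^ (i : ℕ) -
      (Fin.cons a x : Fin (n+1) → K) j ^ (2*(n+1)-1-(i:ℕ))) := by
  have h : (Dpoly x).eval a = (Polynomial.evalRingHom a) (Dpoly x) := rfl
  rw [h, Dpoly]
  erw [RingHom.map_det]
  congr 1
  ext i j
  erw [RingHom.mapMatrix_apply, Matrix.map_apply]
  refine Fin.cases ?_ (fun s => ?_) j <;>
    simp [Matrix.map_apply]

lemma Dpoly_eq {K : Type*} [Field K] {n : ℕ} (x : Fin n → K) :
    Dpoly x = ∑ i : Fin (n+1), Polynomial.C ((-1)^(i:ℕ) *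
        Matrix.det (Matrix.of fun i' j : Fin n =>
          x j ^ ((i.succAbove i' : Fin (n+1)) : ℕ) -
          x j ^ (2*(n+1)-1-((i.succAbove i' : Fin (n+1)) : ℕ)))) *
      (Polynomial.X ^ (i:ℕ) - Polynomial.X ^ (2*(n+1)-1-(i:ℕ))) := by
  rw [Dpoly]
  erw [Matrix.det_succ_column_zero]
  refine Finset.sum_congr rfl fun i _ => ?_
  have hsub : Matrix.submatrix (fun i j : Fin (n+1) =>
      (Fin.cons Polynomial.X (fun s => Polynomial.C (x s)) : Fin (n+1) → Polynomial K) j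
        ^ (i : ℕ) -
      (Fin.cons Polynomial.X (fun s => Polynomial.C (x s)) : Fin (n+1) → Polynomial K) j
        ^ (2*(n+1)-1-(i:ℕ))) i.succAbove Fin.succ =
      (Matrix.of fun i' j : Fin n =>
        x j ^ ((i.succAbove i' : Fin (n+1)) : ℕ) -
        x j ^ (2*(n+1)-1-((i.succAbove i' : Fin (n+1)) : ℕ))).map
        (Polynomial.C : K →+* Polynomial K) := by
    refine Matrix.ext fun i' j => ?_
    simp [Matrix.submatrix, Matrix.map_apply]
  rw [hsub, ← RingHom.mapMatrix_apply, ← RingHom.map_det]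
  simp only [Fin.cons_zero, RingHom.coe_coe, _root_.map_mul, map_pow, map_neg, _root_.map_one, Matrix.of_apply]
  ring

lemma coeff_top_Dpoly {K : Type*} [Field K] {n : ℕ} (x : Fin n → K) :
    (Dpoly x).coeff (2*(n+1)-1) = -(∏ s, x s) * Dval x := by
  have hm0 : (Matrix.of fun i' j : Fin n =>
      x j ^ (((0 : Fin (n+1)).succAbove i' : Fin (n+1)) : ℕ) -
      x j ^ (2*(n+1)-1-(((0 : Fin (n+1)).succAbove i' : Fin (n+1)) : ℕ))).det =
      (∏ s, x s) * Dval x := by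
    have h1 : (Matrix.of fun i' j : Fin n =>
        x j ^ (((0 : Fin (n+1)).succAbove i' : Fin (n+1)) : ℕ) -
        x j ^ (2*(n+1)-1-(((0 : Fin (n+1)).succAbove i' : Fin (n+1)) : ℕ))) =
        Matrix.of fun i' j : Fin n =>
          x j * (x j ^ (i' : ℕ) - x j ^ (2*n - 1 - (i' : ℕ))) := by
      ext i' j
      have hi := i'.isLt
      simp only [Matrix.of_apply, Fin.succAbove_zero, Fin.val_succ, mul_sub]
      rw [show 2*(n+1)-1-((i':ℕ)+1) = (2*n-1-(i':ℕ))+1 by omega, pow_succ, pow_succ]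
      ring
    rw [h1]
    exact Matrix.det_mul_row x (fun i j : Fin n => x j ^ (i : ℕ) - x j ^ (2 * n - 1 - (i : ℕ)))
  rw [Dpoly_eq, Polynomial.finset_sum_coeff, Finset.sum_eq_single 0]
  · rw [hm0]
    simp only [Fin.val_zero, pow_zero, one_mul, Nat.sub_zero, Polynomial.coeff_C_mul,
      Polynomial.coeff_sub, Polynomial.coeff_X_pow, Polynomial.coeff_one]
    rw [if_neg (by omega : ¬ (2*(n+1)-1 = 0))]
    simp
  · intro i _ hi
    have h1 : (i : ℕ) ≠ 2*(n+1)-1 := by have := i.isLt; omega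
    have h2 : 2*(n+1)-1-(i : ℕ) ≠ 2*(n+1)-1 := by
      have := i.isLt
      have : (i : ℕ) ≠ 0 := fun h => hi (Fin.ext h)
      omega
    simp only [Polynomial.coeff_C_mul, Polynomial.coeff_sub, Polynomial.coeff_X_pow,
      if_neg (Ne.symm h1), if_neg (Ne.symm h2), sub_zero, mul_zero, sub_self]
  · simp

lemma natDegree_Dpoly_le {K : Type*} [Field K] {n : ℕ} (x : Fin n → K) :
    (Dpoly x).natDegree ≤ 2*(n+1)-1 := by
  rw [Dpoly_eq]
  refine Polynomial.natDegree_sum_le_of_forall_le _ _ fun i _ => ?_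
  refine (Polynomial.natDegree_C_mul_le _ _).trans ?_
  refine (Polynomial.natDegree_sub_le _ _).trans ?_
  simp only [Polynomial.natDegree_X_pow]
  have := i.isLt
  omega

/-- The `Bₙ` denominator `D_{n+1}`, as a polynomial in its first variable `x₁` over the
remaining variables `x₂,...,x_{n+1}` (assumed independent: distinct, nonzero, with
`Dₙ(x₂,...,x_{n+1}) ≠ 0`), has degree `2(n+1)-1`, vanishes at `x₁ = 1`, at `x₁ = xᵢ`
and at `x₁ = xᵢ⁻¹` for each remaining variable `xᵢ`, and the coefficient of its top
power `x₁^{2(n+1)-1}` is `-x₂⋯x_{n+1} · Dₙ(x₂,...,x_{n+1})`. -/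
theorem stmt16 {K : Type*} [Field K] {n : ℕ} (x : Fin n → K)
    (hinj : Function.Injective x) (hx : ∀ i, x i ≠ 0) (hprev : Dval x ≠ 0) :
    (Dpoly x).natDegree = 2 * (n + 1) - 1 ∧
    (Dpoly x).eval 1 = 0 ∧
    (∀ s : Fin n, (Dpoly x).eval (x s) = 0) ∧
    (∀ s : Fin n, (Dpoly x).eval (x s)⁻¹ = 0) ∧
    (Dpoly x).coeff (2 * (n + 1) - 1) = -(∏ s, x s) * Dval x := by
  refine ⟨?_, ?_, ?_, ?_, coeff_top_Dpoly x⟩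
  · refine Polynomial.natDegree_eq_of_le_of_coeff_ne_zero (natDegree_Dpoly_le x) ?_
    rw [coeff_top_Dpoly]
    exact mul_ne_zero (neg_ne_zero.2 (Finset.prod_ne_zero_iff.2 fun i _ => hx i)) hprev
  · rw [eval_Dpoly]
    apply Matrix.det_eq_zero_of_column_eq_zero 0
    intro i
    simp
  · intro s
    rw [eval_Dpoly]
    apply Matrix.det_zero_of_column_eq (Fin.succ_ne_zero s).symm
    intro k
    simp
  · intro s
    rw [eval_Dpoly]
    set b := x s with hbdef
    have hb : b ≠ 0 := hx s
    set N : ℕ := 2*(n+1)-1 with hNdef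
    set M : Matrix (Fin (n+1)) (Fin (n+1)) K := fun i j =>
      (Fin.cons b⁻¹ x : Fin (n+1) → K) j ^ (i : ℕ) -
      (Fin.cons b⁻¹ x : Fin (n+1) → K) j ^ (N - (i : ℕ)) with hM
    show M.det = 0
    have key : ∀ i : Fin (n+1), (-(b ^ N)) * M i 0 = M i s.succ := by
      intro i
      have hiN : (i : ℕ) ≤ N := by have := i.isLt; omega
      have e1 : b ^ (N - (i : ℕ)) = b ^ N * (b ^ (i : ℕ))⁻¹ := pow_sub₀ _ hb hiN
      have e2 : b ^ (i : ℕ) = b ^ N * (b ^ (N - (i : ℕ)))⁻¹ := by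
        rw [← pow_sub₀ _ hb (Nat.sub_le N (i : ℕ))]
        congr 1
        omega
      simp only [hM, Fin.cons_zero, Fin.cons_succ, ← hbdef, inv_pow]
      rw [show -(b^N) * ((b^(i:ℕ))⁻¹ - (b^(N-(i:ℕ)))⁻¹)
          = -(b^N * (b^(i:ℕ))⁻¹) + b^N * (b^(N-(i:ℕ)))⁻¹ by ring, ← e1, ← e2]
      ring
    have h1 : (Matrix.updateCol M 0 ((-(b ^ N)) • fun i => M i 0)).det
        = (-(b ^ N)) * M.det := by
      rw [Matrix.det_updateCol_smul, Matrix.updateCol_eq_self]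
    have h2 : (Matrix.updateCol M 0 ((-(b ^ N)) • fun i => M i 0)).det = 0 := by
      apply Matrix.det_zero_of_column_eq (Fin.succ_ne_zero s).symm
      intro k
      rw [Matrix.updateCol_apply, Matrix.updateCol_apply,
        if_pos rfl, if_neg (Fin.succ_ne_zero s)]
      simpa using key k
    have := h2.symm.trans h1
    rcases mul_eq_zero.1 this.symm with h | h
    · exact absurd h (by simp [pow_ne_zero _ hb])
    · exact h
end

section
/- Specializing x_i = q^{2(n-i)+1} for 1 ≤ i ≤ n in the B_n Weyl denominator product gives ∏_{i=1}^n (1 - x_i) ∏_{1≤i<j≤n} (x_i - x_j)(x_i x_j - 1), and the resulting ratio det(x_i^{j-1} - x_i^{m+2n-j}) / det(x_i^{j-1} - x_i^{2n-j}) equals ∏_{i=1}^n (1 - q^{m+2i-1})/(1 - q^{2i-1}) · ∏_{1≤i<j≤n} (1 - q^{2(m+i+j-1)})/(1 - q^{2(i+j-1)}). -/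
open Finset Polynomial

namespace S17

noncomputable def T (c : ℝ) : ℕ → ℝ[X]
  | 0 => 1
  | 1 => X - C c
  | (k+2) => (X - C (2*c)) * T c (k+1) - C (c^2) * T c k

lemma T_monic_deg (c : ℝ) : ∀ k, (T c k).Monic ∧ (T c k).natDegree = k
  | 0 => ⟨monic_one, natDegree_one⟩
  | 1 => ⟨monic_X_sub_C c, natDegree_X_sub_C c⟩
  | (k+2) => by
    obtain ⟨h1m, h1d⟩ := T_monic_deg c (k+1)
    obtain ⟨h0m, h0d⟩ := T_monic_deg c k
    have hmul : ((X - C (2*c)) * T c (k+1)).Monic := (monic_X_sub_C _).mul h1m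
    have hdmul : ((X - C (2*c)) * T c (k+1)).natDegree = k+2 := by
      rw [(monic_X_sub_C _).natDegree_mul h1m, natDegree_X_sub_C, h1d]
      omega
    have hndlt : (C (c^2) * T c k).natDegree < ((X - C (2*c)) * T c (k+1)).natDegree := by
      rw [hdmul]
      exact lt_of_le_of_lt ((natDegree_C_mul_le _ _).trans h0d.le) (by omega)
    have hdlt : (C (c^2) * T c k).degree < ((X - C (2*c)) * T c (k+1)).degree := by
      rw [degree_eq_natDegree hmul.ne_zero]
      exact lt_of_le_of_lt degree_le_natDegree (by exact_mod_cast hndlt)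
    refine ⟨hmul.sub_of_left hdlt, ?_⟩
    show ((X - C (2*c)) * T c (k+1) - C (c^2) * T c k).natDegree = k + 2
    rw [natDegree_sub_eq_left_of_natDegree_lt hndlt, hdmul]

lemma T_eval : ∀ (k : ℕ) (u v : ℝ),
    u ^ (2*k+1) - v ^ (2*k+1) = (u - v) * (T (u*v) k).eval ((u+v)^2)
  | 0, u, v => by simp [T]
  | 1, u, v => by simp [T]; ring
  | (k+2), u, v => by
    have h1 := T_eval (k+1) u v
    have h0 := T_eval k u v
    simp only [T, eval_sub, eval_mul, eval_X, eval_C]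
    linear_combination ((u+v)^2 - 2*(u*v)) * h1 - (u*v)^2 * h0

end S17

namespace S17
open Matrix

lemma det_eval (q : ℝ) (n L : ℕ) (hL : 2*n ≤ L) :
    Matrix.det (fun i j : Fin n => (q ^ (2*(n-1-(i:ℕ))+1)) ^ (j:ℕ)
        - (q ^ (2*(n-1-(i:ℕ))+1)) ^ (L-1-(j:ℕ))) =
    ((Equiv.Perm.sign (Fin.revPerm : Equiv.Perm (Fin n)) : ℤ) : ℝ) *
      ((∏ j : Fin n, (q ^ (j:ℕ) - q ^ (L-1-(j:ℕ)))) *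
       ∏ i : Fin n, ∏ j ∈ Finset.Ioi i,
         ((q ^ (j:ℕ) + q ^ (L-1-(j:ℕ)))^2 - ((q ^ (i:ℕ) + q ^ (L-1-(i:ℕ)))^2))) := by
  set c : ℝ := q ^ (L-1) with hc
  set z : Fin n → ℝ := fun j => (q ^ (j:ℕ) + q ^ (L-1-(j:ℕ)))^2 with hz
  have key : ∀ i j : Fin n, (q ^ (2*(n-1-(i:ℕ))+1)) ^ (j:ℕ)
        - (q ^ (2*(n-1-(i:ℕ))+1)) ^ (L-1-(j:ℕ))
      = (q ^ (j:ℕ) - q ^ (L-1-(j:ℕ))) * (T c (n-1-(i:ℕ))).eval (z j) := by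
    intro i j
    have hj : (j:ℕ) < n := j.2
    have hcc : q ^ (j:ℕ) * q ^ (L-1-(j:ℕ)) = c := by
      rw [hc, ← pow_add]; congr 1; omega
    have h := T_eval (n-1-(i:ℕ)) (q ^ (j:ℕ)) (q ^ (L-1-(j:ℕ)))
    rw [hcc] at h
    have e1 : (q ^ (2*(n-1-(i:ℕ))+1)) ^ (j:ℕ) = (q ^ (j:ℕ)) ^ (2*(n-1-(i:ℕ))+1) := by
      rw [← pow_mul, ← pow_mul, Nat.mul_comm]
    have e2 : (q ^ (2*(n-1-(i:ℕ))+1)) ^ (L-1-(j:ℕ))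
        = (q ^ (L-1-(j:ℕ))) ^ (2*(n-1-(i:ℕ))+1) := by
      rw [← pow_mul, ← pow_mul, Nat.mul_comm]
    rw [e1, e2, h, hz]
  calc Matrix.det (fun i j : Fin n => (q ^ (2*(n-1-(i:ℕ))+1)) ^ (j:ℕ)
        - (q ^ (2*(n-1-(i:ℕ))+1)) ^ (L-1-(j:ℕ)))
      = Matrix.det (Matrix.of fun i j : Fin n =>
          (q ^ (j:ℕ) - q ^ (L-1-(j:ℕ))) * (T c (n-1-(i:ℕ))).eval (z j)) := by
        congr 1; funext i j; exact key i j
    _ = (∏ j : Fin n, (q ^ (j:ℕ) - q ^ (L-1-(j:ℕ)))) *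
          Matrix.det (Matrix.of fun i j : Fin n => (T c (n-1-(i:ℕ))).eval (z j)) :=
        Matrix.det_mul_row _ _
    _ = (∏ j : Fin n, (q ^ (j:ℕ) - q ^ (L-1-(j:ℕ)))) *
          (((Equiv.Perm.sign (Fin.revPerm : Equiv.Perm (Fin n)) : ℤ) : ℝ) *
            Matrix.det (Matrix.of fun i j : Fin n => (T c ((i:ℕ))).eval (z j))) := by
        congr 1
        have : (Matrix.of fun i j : Fin n => (T c (n-1-(i:ℕ))).eval (z j))
            = (Matrix.of fun i j : Fin n => (T c ((i:ℕ))).eval (z j)).submatrix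
                (Fin.revPerm : Equiv.Perm (Fin n)) id := by
          ext i j
          simp only [Matrix.submatrix_apply, Matrix.of_apply, id_eq, Fin.revPerm_apply]
          congr 2
          have := i.2
          simp [Fin.val_rev]; omega
        rw [this, Matrix.det_permute]
    _ = _ := by
        have hvd := Matrix.det_eval_matrixOfPolynomials_eq_det_vandermonde z
          (fun j : Fin n => T c (j:ℕ)) (fun j => (T_monic_deg c j).2)
          (fun j => (T_monic_deg c j).1)
        have ht : Matrix.det (Matrix.of fun i j : Fin n => (T c ((i:ℕ))).eval (z j))
            = Matrix.det (Matrix.of fun i j : Fin n => (T c ((j:ℕ))).eval (z i)) := by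
          rw [← Matrix.det_transpose]; congr 1
        rw [ht, ← hvd, Matrix.det_vandermonde]
        ring

end S17

namespace S17
open Finset

lemma prod_pairs {M : Type*} [CommMonoid M] {n : ℕ} (f : Fin n → Fin n → M) :
    ∏ p ∈ Finset.univ.filter (fun p : Fin n × Fin n => p.1 < p.2), f p.1 p.2
      = ∏ i : Fin n, ∏ j ∈ Finset.Ioi i, f i j := by
  rw [Finset.prod_filter, ← Finset.univ_product_univ, Finset.prod_product]
  refine Finset.prod_congr rfl fun i _ => ?_
  rw [← Finset.filter_lt_eq_Ioi, Finset.prod_filter]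

lemma prod_pairs_rev {M : Type*} [CommMonoid M] {n : ℕ} (f : Fin n → Fin n → M) :
    ∏ p ∈ Finset.univ.filter (fun p : Fin n × Fin n => p.1 < p.2), f p.1 p.2
      = ∏ p ∈ Finset.univ.filter (fun p : Fin n × Fin n => p.1 < p.2),
          f p.2.rev p.1.rev := by
  refine Finset.prod_nbij' (fun p => (p.2.rev, p.1.rev)) (fun p => (p.2.rev, p.1.rev))
    ?_ ?_ ?_ ?_ ?_
  · intro p hp; simp only [Finset.mem_filter, Finset.mem_univ, true_and] at *
    exact Fin.rev_lt_rev.mpr hp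
  · intro p hp; simp only [Finset.mem_filter, Finset.mem_univ, true_and] at *
    exact Fin.rev_lt_rev.mpr hp
  · intro p _; simp [Fin.rev_rev]
  · intro p _; simp [Fin.rev_rev]
  · intro p _; simp [Fin.rev_rev]

lemma sign_rev_eq {n : ℕ} :
    ((Equiv.Perm.sign (Fin.revPerm : Equiv.Perm (Fin n)) : ℤ) : ℝ)
      = ∏ i : Fin n, ∏ j ∈ Finset.Ioi i, (-1 : ℝ) := by
  have h := Matrix.det_permute (Fin.revPerm : Equiv.Perm (Fin n))
    (Matrix.vandermonde (fun i : Fin n => (i : ℝ)))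
  have hsub : (Matrix.vandermonde (fun i : Fin n => (i : ℝ))).submatrix
        (Fin.revPerm : Equiv.Perm (Fin n)) id
      = Matrix.vandermonde (fun i : Fin n => ((i.rev : Fin n) : ℝ)) := by
    ext i j; simp [Matrix.vandermonde]
  rw [hsub, Matrix.det_vandermonde, Matrix.det_vandermonde] at h
  have hL : (∏ i : Fin n, ∏ j ∈ Finset.Ioi i, (((j.rev : Fin n) : ℝ) - ((i.rev : Fin n) : ℝ)))
      = (∏ i : Fin n, ∏ j ∈ Finset.Ioi i, (-1 : ℝ)) *
        ∏ i : Fin n, ∏ j ∈ Finset.Ioi i, (((j : ℝ)) - ((i : ℝ))) := by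
    rw [← Finset.prod_mul_distrib]
    refine Finset.prod_congr rfl fun i _ => ?_
    rw [← Finset.prod_mul_distrib]
    refine Finset.prod_congr rfl fun j hj => ?_
    have hij' : i < j := Finset.mem_Ioi.mp hj
    have hij : (i : ℕ) < (j : ℕ) := hij'
    have h1 : ((j.rev : Fin n) : ℕ) = n - 1 - (j : ℕ) := by
      have := j.2; simp [Fin.val_rev]; omega
    have h2 : ((i.rev : Fin n) : ℕ) = n - 1 - (i : ℕ) := by
      have := i.2; simp [Fin.val_rev]; omega
    have hjn : (j : ℕ) ≤ n - 1 := by have := j.2; omega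
    have hin : (i : ℕ) ≤ n - 1 := by have := i.2; omega
    rw [h1, h2]
    rw [Nat.cast_sub hjn, Nat.cast_sub hin]
    push_cast
    ring
  rw [hL] at h
  have hne : (∏ i : Fin n, ∏ j ∈ Finset.Ioi i, (((j : ℝ)) - ((i : ℝ)))) ≠ 0 := by
    apply Finset.prod_ne_zero_iff.mpr
    intro i _
    apply Finset.prod_ne_zero_iff.mpr
    intro j hj
    have hij' : i < j := Finset.mem_Ioi.mp hj
    have hij : (i : ℕ) < (j : ℕ) := hij'
    have : (i : ℝ) < (j : ℝ) := by exact_mod_cast hij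
    linarith
  exact (mul_right_cancel₀ hne h).symm

end S17

namespace S17

lemma wfact {n L : ℕ} (q : ℝ) (hL : 2*n ≤ L) (j : Fin n) :
    q^(j:ℕ) - q^(L-1-(j:ℕ)) = q^(j:ℕ) * (1 - q^(L-1-2*(j:ℕ))) := by
  have hj : (j:ℕ) < n := j.2
  have h : L-1-(j:ℕ) = (j:ℕ) + (L-1-2*(j:ℕ)) := by omega
  rw [h, pow_add, mul_sub, mul_one]

lemma zfact {n L : ℕ} (q : ℝ) (hL : 2*n ≤ L) {i j : Fin n} (hij : i < j) :
    (q^(j:ℕ) + q^(L-1-(j:ℕ)))^2 - (q^(i:ℕ) + q^(L-1-(i:ℕ)))^2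
      = -1 * (q^(2*(i:ℕ)) *
        ((1 - q^(2*((j:ℕ)-(i:ℕ)))) * (1 - q^(2*(L-1-(i:ℕ)-(j:ℕ)))))) := by
  have hj : (j:ℕ) < n := j.2
  have hii : (i:ℕ) < (j:ℕ) := hij
  have hX1 : q^(j:ℕ) = q^(i:ℕ) * q^((j:ℕ)-(i:ℕ)) := by
    rw [← pow_add]; congr 1; omega
  have hX2 : q^(L-1-(j:ℕ)) = q^(i:ℕ) * q^(L-1-(i:ℕ)-(j:ℕ)) := by
    rw [← pow_add]; congr 1; omega
  have hX4 : q^(L-1-(i:ℕ)) = q^(i:ℕ) * (q^((j:ℕ)-(i:ℕ)) * q^(L-1-(i:ℕ)-(j:ℕ))) := by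
    rw [← pow_add, ← pow_add]; congr 1; omega
  have hX5 : q^(2*(i:ℕ)) = q^(i:ℕ) * q^(i:ℕ) := by
    rw [← pow_add]; congr 1; omega
  have hX6 : q^(2*((j:ℕ)-(i:ℕ))) = q^((j:ℕ)-(i:ℕ)) * q^((j:ℕ)-(i:ℕ)) := by
    rw [← pow_add]; congr 1; omega
  have hX7 : q^(2*(L-1-(i:ℕ)-(j:ℕ)))
      = q^(L-1-(i:ℕ)-(j:ℕ)) * q^(L-1-(i:ℕ)-(j:ℕ)) := by
    rw [← pow_add]; congr 1; omega
  rw [hX7, hX6, hX5, hX4, hX2, hX1]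
  ring

lemma pairfact {n : ℕ} (q : ℝ) {i j : Fin n} (hij : i < j) :
    (q^(2*(n-1-(i:ℕ))+1) - q^(2*(n-1-(j:ℕ))+1)) *
      (q^(2*(n-1-(i:ℕ))+1) * q^(2*(n-1-(j:ℕ))+1) - 1)
    = q^(2*(n-1-(j:ℕ))+1) *
        ((1 - q^(2*((j:ℕ)-(i:ℕ)))) * (1 - q^(2*(2*n-1-(i:ℕ)-(j:ℕ))))) := by
  have hj : (j:ℕ) < n := j.2
  have hii : (i:ℕ) < (j:ℕ) := hij
  have hX1 : q^(2*(n-1-(i:ℕ))+1)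
      = q^(2*(n-1-(j:ℕ))+1) * (q^((j:ℕ)-(i:ℕ)) * q^((j:ℕ)-(i:ℕ))) := by
    rw [← pow_add, ← pow_add]; congr 1; omega
  have hX6 : q^(2*((j:ℕ)-(i:ℕ))) = q^((j:ℕ)-(i:ℕ)) * q^((j:ℕ)-(i:ℕ)) := by
    rw [← pow_add]; congr 1; omega
  have hX7 : q^(2*(2*n-1-(i:ℕ)-(j:ℕ)))
      = q^(2*(n-1-(j:ℕ))+1) * (q^(2*(n-1-(j:ℕ))+1) * (q^((j:ℕ)-(i:ℕ)) * q^((j:ℕ)-(i:ℕ)))) := by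
    rw [← pow_add, ← pow_add, ← pow_add]; congr 1; omega
  rw [hX7, hX6, hX1]
  ring

end S17

namespace S17
open Finset

lemma scalar1 {n : ℕ} (q : ℝ) :
    (∏ j : Fin n, q^(j:ℕ)) * ∏ i : Fin n, ∏ j ∈ Finset.Ioi i, q^(2*(i:ℕ))
      = ∏ i : Fin n, ∏ j ∈ Finset.Ioi i, q^(2*(n-1-(j:ℕ))+1) := by
  have h1 : (∏ i : Fin n, ∏ j ∈ Finset.Ioi i, q^(2*(n-1-(j:ℕ))+1))
      = ∏ i : Fin n, ∏ j ∈ Finset.Ioi i, q^(2*(i:ℕ)+1) := by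
    rw [← prod_pairs (fun i j : Fin n => q^(2*(n-1-(j:ℕ))+1)),
      prod_pairs_rev (fun i j : Fin n => q^(2*(n-1-(j:ℕ))+1)),
      prod_pairs (fun i j : Fin n => q^(2*(n-1-((i.rev : Fin n):ℕ))+1))]
    refine Finset.prod_congr rfl fun i _ => Finset.prod_congr rfl fun j _ => ?_
    congr 1
    have hi := i.2
    simp [Fin.val_rev]
    omega
  rw [h1]
  have h2 : ∀ i : Fin n, ∀ j : Fin n, q^(2*(i:ℕ)+1) = q^(2*(i:ℕ)) * q := by
    intro i j; rw [pow_succ]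
  have h3 : (∏ i : Fin n, ∏ j ∈ Finset.Ioi i, q^(2*(i:ℕ)+1))
      = (∏ i : Fin n, ∏ j ∈ Finset.Ioi i, q^(2*(i:ℕ))) *
        ∏ i : Fin n, ∏ j ∈ Finset.Ioi i, q := by
    rw [← Finset.prod_mul_distrib]
    refine Finset.prod_congr rfl fun i _ => ?_
    rw [← Finset.prod_mul_distrib]
    exact Finset.prod_congr rfl fun j hj => h2 i j
  rw [h3, mul_comm]
  congr 1
  have h4 : (∏ i : Fin n, ∏ _j ∈ Finset.Ioi i, q) = ∏ i : Fin n, q^(n-1-(i:ℕ)) := by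
    refine Finset.prod_congr rfl fun i _ => ?_
    rw [Finset.prod_const, Fin.card_Ioi]
  rw [h4, Fin.prod_univ_eq_prod_range (fun i => q^(n-1-i)) n,
    Fin.prod_univ_eq_prod_range (fun i => q^i) n]
  exact (Finset.prod_range_reflect (fun i => q^i) n).symm

end S17

namespace S17
open Finset

lemma part1 {n : ℕ} (q : ℝ) :
    Matrix.det (fun i j : Fin n => (q ^ (2*(n-1-(i:ℕ))+1)) ^ (j:ℕ)
        - (q ^ (2*(n-1-(i:ℕ))+1)) ^ (2*n-1-(j:ℕ)))
    = (∏ i : Fin n, (1 - q ^ (2*(n-1-(i:ℕ))+1))) *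
        ∏ p ∈ Finset.univ.filter (fun p : Fin n × Fin n => p.1 < p.2),
          (q ^ (2*(n-1-(p.1:ℕ))+1) - q ^ (2*(n-1-(p.2:ℕ))+1)) *
          (q ^ (2*(n-1-(p.1:ℕ))+1) * q ^ (2*(n-1-(p.2:ℕ))+1) - 1) := by
  rw [det_eval q n (2*n) le_rfl, sign_rev_eq,
    prod_pairs (fun i j : Fin n =>
      (q ^ (2*(n-1-(i:ℕ))+1) - q ^ (2*(n-1-(j:ℕ))+1)) *
      (q ^ (2*(n-1-(i:ℕ))+1) * q ^ (2*(n-1-(j:ℕ))+1) - 1))]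
  -- rewrite the W product
  have hW : (∏ j : Fin n, (q^(j:ℕ) - q^(2*n-1-(j:ℕ))))
      = (∏ j : Fin n, q^(j:ℕ)) * ∏ j : Fin n, (1 - q^(2*(n-1-(j:ℕ))+1)) := by
    rw [← Finset.prod_mul_distrib]
    refine Finset.prod_congr rfl fun j _ => ?_
    have h := wfact (n := n) (L := 2*n) q le_rfl j
    have hj : (j:ℕ) < n := j.2
    have he : 2*n-1-2*(j:ℕ) = 2*(n-1-(j:ℕ))+1 := by omega
    rw [h, he]
  -- rewrite the Z double product
  have hZ : (∏ i : Fin n, ∏ j ∈ Finset.Ioi i,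
        ((q ^ (j:ℕ) + q ^ (2*n-1-(j:ℕ)))^2 - (q ^ (i:ℕ) + q ^ (2*n-1-(i:ℕ)))^2))
      = (∏ i : Fin n, ∏ j ∈ Finset.Ioi i, (-1 : ℝ)) *
        ((∏ i : Fin n, ∏ j ∈ Finset.Ioi i, q^(2*(i:ℕ))) *
         ∏ i : Fin n, ∏ j ∈ Finset.Ioi i,
           ((1 - q^(2*((j:ℕ)-(i:ℕ)))) * (1 - q^(2*(2*n-1-(i:ℕ)-(j:ℕ)))))) := by
    rw [← Finset.prod_mul_distrib, ← Finset.prod_mul_distrib]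
    refine Finset.prod_congr rfl fun i _ => ?_
    rw [← Finset.prod_mul_distrib, ← Finset.prod_mul_distrib]
    refine Finset.prod_congr rfl fun j hj => ?_
    have hij : i < j := Finset.mem_Ioi.mp hj
    exact zfact (n := n) (L := 2*n) q le_rfl hij
  -- rewrite the pair product
  have hP : (∏ i : Fin n, ∏ j ∈ Finset.Ioi i,
        ((q ^ (2*(n-1-(i:ℕ))+1) - q ^ (2*(n-1-(j:ℕ))+1)) *
         (q ^ (2*(n-1-(i:ℕ))+1) * q ^ (2*(n-1-(j:ℕ))+1) - 1)))
      = (∏ i : Fin n, ∏ j ∈ Finset.Ioi i, q^(2*(n-1-(j:ℕ))+1)) *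
        ∏ i : Fin n, ∏ j ∈ Finset.Ioi i,
           ((1 - q^(2*((j:ℕ)-(i:ℕ)))) * (1 - q^(2*(2*n-1-(i:ℕ)-(j:ℕ))))) := by
    rw [← Finset.prod_mul_distrib]
    refine Finset.prod_congr rfl fun i _ => ?_
    rw [← Finset.prod_mul_distrib]
    refine Finset.prod_congr rfl fun j hj => ?_
    exact pairfact q (Finset.mem_Ioi.mp hj)
  rw [hW, hZ, hP]
  have hsq : (∏ i : Fin n, ∏ j ∈ Finset.Ioi i, (-1 : ℝ)) *
      (∏ i : Fin n, ∏ j ∈ Finset.Ioi i, (-1 : ℝ)) = 1 := by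
    rw [← Finset.prod_mul_distrib]
    refine Finset.prod_eq_one fun i _ => ?_
    rw [← Finset.prod_mul_distrib]
    exact Finset.prod_eq_one fun j _ => by norm_num
  have hs := scalar1 (n := n) q
  linear_combination
    ((∏ j : Fin n, (1 - q^(2*(n-1-(j:ℕ))+1))) *
     (∏ i : Fin n, ∏ j ∈ Finset.Ioi i,
       ((1 - q^(2*((j:ℕ)-(i:ℕ)))) * (1 - q^(2*(2*n-1-(i:ℕ)-(j:ℕ)))))) *
     ((∏ j : Fin n, q^(j:ℕ)) * ∏ i : Fin n, ∏ j ∈ Finset.Ioi i, q^(2*(i:ℕ)))) * hsq +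
    ((∏ j : Fin n, (1 - q^(2*(n-1-(j:ℕ))+1))) *
     (∏ i : Fin n, ∏ j ∈ Finset.Ioi i,
       ((1 - q^(2*((j:ℕ)-(i:ℕ)))) * (1 - q^(2*(2*n-1-(i:ℕ)-(j:ℕ))))))) * hs

end S17

namespace S17
open Finset

lemma one_sub_pow_ne {q : ℝ} (hq0 : 0 < q) (hq1 : q < 1) {e : ℕ} (he : e ≠ 0) :
    1 - q ^ e ≠ 0 := by
  have : q ^ e < 1 := pow_lt_one₀ hq0.le hq1 he
  linarith

lemma part2core {m n : ℕ} (q : ℝ) (hq0 : 0 < q) (hq1 : q < 1) :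
    Matrix.det (fun i j : Fin n => (q^(2*(n-1-(i:ℕ))+1))^(j:ℕ)
        - (q^(2*(n-1-(i:ℕ))+1))^(m+2*n-1-(j:ℕ)))
    = ((∏ i ∈ Finset.range n, (1 - q^(m+2*i+1)) / (1 - q^(2*i+1))) *
        ∏ p ∈ Finset.univ.filter (fun p : Fin n × Fin n => p.1 < p.2),
          (1 - q^(2*(m+(p.1:ℕ)+(p.2:ℕ)+1))) / (1 - q^(2*((p.1:ℕ)+(p.2:ℕ)+1)))) *
      Matrix.det (fun i j : Fin n => (q^(2*(n-1-(i:ℕ))+1))^(j:ℕ)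
        - (q^(2*(n-1-(i:ℕ))+1))^(2*n-1-(j:ℕ))) := by
  rw [det_eval q n (m+2*n) (by omega), det_eval q n (2*n) le_rfl]
  have hR1 : (∏ i ∈ Finset.range n, (1 - q^(m+2*i+1)) / (1 - q^(2*i+1)))
      = ∏ j : Fin n, (1 - q^(m+2*n-1-2*(j:ℕ))) / (1 - q^(2*n-1-2*(j:ℕ))) := by
    calc (∏ i ∈ Finset.range n, (1 - q^(m+2*i+1)) / (1 - q^(2*i+1)))
        = ∏ i ∈ Finset.range n, (1 - q^(m+2*(n-1-i)+1)) / (1 - q^(2*(n-1-i)+1)) :=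
          (Finset.prod_range_reflect (fun i => (1 - q^(m+2*i+1)) / (1 - q^(2*i+1))) n).symm
      _ = ∏ i ∈ Finset.range n, (1 - q^(m+2*n-1-2*i)) / (1 - q^(2*n-1-2*i)) := by
          refine Finset.prod_congr rfl fun i hi => ?_
          have hi' : i < n := Finset.mem_range.mp hi
          have e1 : m+2*(n-1-i)+1 = m+2*n-1-2*i := by omega
          have e2 : 2*(n-1-i)+1 = 2*n-1-2*i := by omega
          rw [e1, e2]
      _ = ∏ j : Fin n, (1 - q^(m+2*n-1-2*(j:ℕ))) / (1 - q^(2*n-1-2*(j:ℕ))) :=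
          (Fin.prod_univ_eq_prod_range
            (fun i => (1 - q^(m+2*n-1-2*i)) / (1 - q^(2*n-1-2*i))) n).symm
  have hW2 : (∏ j : Fin n, (q^(j:ℕ) - q^(m+2*n-1-(j:ℕ))))
      = (∏ j : Fin n, (1 - q^(m+2*n-1-2*(j:ℕ))) / (1 - q^(2*n-1-2*(j:ℕ)))) *
        ∏ j : Fin n, (q^(j:ℕ) - q^(2*n-1-(j:ℕ))) := by
    rw [← Finset.prod_mul_distrib]
    refine Finset.prod_congr rfl fun j _ => ?_
    have hj : (j:ℕ) < n := j.2
    rw [wfact (n := n) (L := m+2*n) q (by omega) j, wfact (n := n) (L := 2*n) q le_rfl j]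
    have hne : 1 - q^(2*n-1-2*(j:ℕ)) ≠ 0 := one_sub_pow_ne hq0 hq1 (by omega)
    field_simp
  have hR2 : (∏ p ∈ Finset.univ.filter (fun p : Fin n × Fin n => p.1 < p.2),
        (1 - q^(2*(m+(p.1:ℕ)+(p.2:ℕ)+1))) / (1 - q^(2*((p.1:ℕ)+(p.2:ℕ)+1))))
      = ∏ i : Fin n, ∏ j ∈ Finset.Ioi i,
          (1 - q^(2*(m+2*n-1-(i:ℕ)-(j:ℕ)))) / (1 - q^(2*(2*n-1-(i:ℕ)-(j:ℕ)))) := by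
    rw [prod_pairs_rev (fun a b : Fin n =>
        (1 - q^(2*(m+(a:ℕ)+(b:ℕ)+1))) / (1 - q^(2*((a:ℕ)+(b:ℕ)+1)))),
      prod_pairs (fun a b : Fin n =>
        (1 - q^(2*(m+((b.rev : Fin n):ℕ)+((a.rev : Fin n):ℕ)+1)))
          / (1 - q^(2*(((b.rev : Fin n):ℕ)+((a.rev : Fin n):ℕ)+1))))]
    refine Finset.prod_congr rfl fun i _ => Finset.prod_congr rfl fun j hj => ?_
    have hij : i < j := Finset.mem_Ioi.mp hj
    have hjn : (j:ℕ) < n := j.2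
    have hin : (i:ℕ) < n := i.2
    have h1 : ((j.rev : Fin n) : ℕ) = n - 1 - (j:ℕ) := by simp [Fin.val_rev]; omega
    have h2 : ((i.rev : Fin n) : ℕ) = n - 1 - (i:ℕ) := by simp [Fin.val_rev]; omega
    rw [h1, h2]
    have hii : (i:ℕ) < (j:ℕ) := hij
    have e1 : 2*(m+(n-1-(j:ℕ))+(n-1-(i:ℕ))+1) = 2*(m+2*n-1-(i:ℕ)-(j:ℕ)) := by omega
    have e2 : 2*((n-1-(j:ℕ))+(n-1-(i:ℕ))+1) = 2*(2*n-1-(i:ℕ)-(j:ℕ)) := by omega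
    rw [e1, e2]
  have hZ2 : (∏ i : Fin n, ∏ j ∈ Finset.Ioi i,
        ((q ^ (j:ℕ) + q ^ (m+2*n-1-(j:ℕ)))^2 - (q ^ (i:ℕ) + q ^ (m+2*n-1-(i:ℕ)))^2))
      = (∏ i : Fin n, ∏ j ∈ Finset.Ioi i,
          (1 - q^(2*(m+2*n-1-(i:ℕ)-(j:ℕ)))) / (1 - q^(2*(2*n-1-(i:ℕ)-(j:ℕ))))) *
        ∏ i : Fin n, ∏ j ∈ Finset.Ioi i,
          ((q ^ (j:ℕ) + q ^ (2*n-1-(j:ℕ)))^2 - (q ^ (i:ℕ) + q ^ (2*n-1-(i:ℕ)))^2) := by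
    rw [← Finset.prod_mul_distrib]
    refine Finset.prod_congr rfl fun i _ => ?_
    rw [← Finset.prod_mul_distrib]
    refine Finset.prod_congr rfl fun j hj => ?_
    have hij : i < j := Finset.mem_Ioi.mp hj
    have hii : (i:ℕ) < (j:ℕ) := hij
    have hjn : (j:ℕ) < n := j.2
    rw [zfact (n := n) (L := m+2*n) q (by omega) hij,
      zfact (n := n) (L := 2*n) q le_rfl hij]
    have e1 : m+2*n-1-(i:ℕ)-(j:ℕ) = m+2*n-1-(i:ℕ)-(j:ℕ) := rfl
    have hne : 1 - q^(2*(2*n-1-(i:ℕ)-(j:ℕ))) ≠ 0 := one_sub_pow_ne hq0 hq1 (by omega)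
    field_simp
  rw [hR1, hR2, hW2, hZ2]
  ring

end S17

/-- Specializing `xᵢ = q^{2(n-i)+1}` (0-indexed: `q^{2(n-1-i)+1}`) in the `Bₙ` Weyl
denominator: the determinant `det(xᵢ^{j-1} - xᵢ^{2n-j})` equals the product
`∏ᵢ(1-xᵢ) ∏_{i<j}(xᵢ-xⱼ)(xᵢxⱼ-1)`, and the ratio
`det(xᵢ^{j-1} - xᵢ^{m+2n-j}) / det(xᵢ^{j-1} - xᵢ^{2n-j})` equals
`∏_{i=1}^n (1-q^{m+2i-1})/(1-q^{2i-1}) ∏_{1≤i<j≤n} (1-q^{2(m+i+j-1)})/(1-q^{2(i+j-1)})`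
(0-indexed exponents: `m+2i+1`, `2i+1`, `2(m+i+j+1)`, `2(i+j+1)`); stated for real
`0 < q < 1`, with `j` in the matrices 0-indexed so the exponent pairs are
`(j, 2n-1-j)` and `(j, m+2n-1-j)`. -/
theorem stmt17 {m n : ℕ} (hm : 0 < m) (hn : 0 < n) (q : ℝ) (hq0 : 0 < q) (hq1 : q < 1)
    (x : Fin n → ℝ) (hxdef : ∀ i, x i = q ^ (2 * (n - 1 - (i : ℕ)) + 1)) :
    (Matrix.det (fun i j : Fin n => x i ^ (j : ℕ) - x i ^ (2 * n - 1 - (j : ℕ))) =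
      (∏ i, (1 - x i)) *
        ∏ p ∈ Finset.univ.filter (fun p : Fin n × Fin n => p.1 < p.2),
          (x p.1 - x p.2) * (x p.1 * x p.2 - 1)) ∧
    Matrix.det (fun i j : Fin n => x i ^ (j : ℕ) - x i ^ (m + 2 * n - 1 - (j : ℕ))) /
        Matrix.det (fun i j : Fin n => x i ^ (j : ℕ) - x i ^ (2 * n - 1 - (j : ℕ))) =
      (∏ i ∈ Finset.range n, (1 - q ^ (m + 2 * i + 1)) / (1 - q ^ (2 * i + 1))) *
        ∏ p ∈ Finset.univ.filter (fun p : Fin n × Fin n => p.1 < p.2),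
          (1 - q ^ (2 * (m + (p.1 : ℕ) + (p.2 : ℕ) + 1))) /
            (1 - q ^ (2 * ((p.1 : ℕ) + (p.2 : ℕ) + 1))) := by
  have hx : x = fun i : Fin n => q ^ (2 * (n - 1 - (i : ℕ)) + 1) := funext hxdef
  subst hx
  constructor
  · exact S17.part1 q
  · have hDD : Matrix.det (fun i j : Fin n => (q^(2*(n-1-(i:ℕ))+1))^(j:ℕ)
        - (q^(2*(n-1-(i:ℕ))+1))^(2*n-1-(j:ℕ))) ≠ 0 := by
      rw [S17.part1 q]
      apply mul_ne_zero
      · rw [Finset.prod_ne_zero_iff]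
        intro i _
        exact S17.one_sub_pow_ne hq0 hq1 (by omega)
      · rw [Finset.prod_ne_zero_iff]
        intro p hp
        have hij : p.1 < p.2 := (Finset.mem_filter.mp hp).2
        have hii : (p.1:ℕ) < (p.2:ℕ) := hij
        have hjn : (p.2:ℕ) < n := p.2.2
        rw [S17.pairfact q hij]
        apply mul_ne_zero (pow_ne_zero _ hq0.ne')
        exact mul_ne_zero (S17.one_sub_pow_ne hq0 hq1 (by omega))
          (S17.one_sub_pow_ne hq0 hq1 (by omega))
    rw [div_eq_iff hDD]
    exact S17.part2core q hq0 hq1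
end
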